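/- arXiv:2601.23120 — 6 statements merged into one kernel-verified Lean document; each statement's English description precedes it below -/
import Mathlib

section
/- Let θ > 0, a ∈ ℝⁿ, and let x : [t₀, ∞) → ℝⁿ be continuously differentiable. If there exists a constant D₀ such that ‖x(t) − a + θ t ẋ(t)‖² ≤ D₀ for all t ∈ [t₀, ∞), then x(t) is bounded on the interval [t₀, ∞). -/
open scoped RealInnerProductSpace

/-- Lemma B.3 / Lemma `limit1`: Let `θ > 0`, `a ∈ ℝⁿ`, and let
`x : [t₀, ∞) → ℝⁿ` be continuously differentiable.  If there is a constant `D₀` with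
`‖x(t) - a + θ t ẋ(t)‖² ≤ D₀` for all `t ≥ t₀`, then `x` is bounded on `[t₀, ∞)`. -/
theorem stmt_0 {n : ℕ} (t₀ θ D₀ : ℝ) (ht₀ : 0 < t₀) (hθ : 0 < θ)
    (a : EuclideanSpace ℝ (Fin n)) (x : ℝ → EuclideanSpace ℝ (Fin n))
    (hx : ContDiffOn ℝ 1 x (Set.Ici t₀))
    (hbound : ∀ t ∈ Set.Ici t₀, ‖x t - a + (θ * t) • deriv x t‖ ^ 2 ≤ D₀) :
    ∃ M : ℝ, ∀ t ∈ Set.Ici t₀, ‖x t‖ ≤ M := by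
  set c : ℝ := 1 / θ with hcdef
  have hc0 : 0 < c := by positivity
  set s : ℝ := t₀ + 1 with hsdef
  have hs0 : 0 < s := by linarith
  have hst : t₀ < s := by linarith
  have hxc : ContinuousOn x (Set.Ici t₀) := hx.continuousOn
  -- bound on the compact piece
  obtain ⟨K, hK⟩ : ∃ K, ∀ u ∈ Set.Icc t₀ s, ‖x u - a‖ ≤ K := by
    obtain ⟨K, hK⟩ := isCompact_Icc.exists_bound_of_continuousOn
      (f := fun u => x u - a)
      ((hxc.mono Set.Icc_subset_Ici_self).sub continuousOn_const)
    exact ⟨K, hK⟩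
  have hsq : ∀ t ∈ Set.Ici t₀, ‖x t - a + (θ * t) • deriv x t‖ ≤ Real.sqrt D₀ := by
    intro t ht
    exact Real.le_sqrt_of_sq_le (hbound t ht)
  have hsqrt0 : 0 ≤ Real.sqrt D₀ := Real.sqrt_nonneg _
  -- differentiability at points > t₀
  have hdiff : ∀ u, t₀ < u → HasDerivAt x (deriv x u) u := by
    intro u hu
    have : DifferentiableAt ℝ x u :=
      ((hx.differentiableOn one_ne_zero) u (le_of_lt hu)).differentiableAt
        (Ici_mem_nhds hu)
    exact this.hasDerivAt
  -- key estimate for T ≥ s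
  have key : ∀ T, s ≤ T → ‖x T - a‖ ≤ ‖x s - a‖ + Real.sqrt D₀ := by
    intro T hT
    set f : ℝ → EuclideanSpace ℝ (Fin n) := fun u => (u ^ c) • (x u - a) with hfdef
    set B : ℝ → ℝ := fun u => ‖x s - a‖ * s ^ c + Real.sqrt D₀ * (u ^ c - s ^ c) with hBdef
    have hupos : ∀ u ∈ Set.Icc s T, (0:ℝ) < u := fun u hu => lt_of_lt_of_le hs0 hu.1
    have hrpow_deriv : ∀ u ∈ Set.Ico s T,
        HasDerivAt (fun v : ℝ => v ^ c) (c * u ^ (c - 1)) u := by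
      intro u hu
      exact Real.hasDerivAt_rpow_const (Or.inl (ne_of_gt (hupos u ⟨hu.1, le_of_lt hu.2⟩)))
    have hfc : ContinuousOn f (Set.Icc s T) := by
      refine ContinuousOn.smul (f := fun u : ℝ => u ^ c) (g := fun u => x u - a) ?_ ?_
      · intro u hu
        exact (Real.continuousAt_rpow_const u c
          (Or.inl (ne_of_gt (hupos u hu)))).continuousWithinAt
      · exact ((hxc.mono (fun u hu => le_trans (le_of_lt hst) hu.1)).sub continuousOn_const)
    have hf' : ∀ u ∈ Set.Ico s T, HasDerivWithinAt f
        ((c * u ^ (c - 1)) • (x u - a + (θ * u) • deriv x u)) (Set.Ici u) u := by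
      intro u hu
      have hu0 : (0:ℝ) < u := hupos u ⟨hu.1, le_of_lt hu.2⟩
      have hxu : HasDerivAt (fun v => x v - a) (deriv x u) u :=
        (hdiff u (lt_of_lt_of_le hst hu.1)).sub_const a
      have h1 : HasDerivAt f
          ((u ^ c) • deriv x u + (c * u ^ (c - 1)) • (x u - a)) u :=
        (hrpow_deriv u hu).smul hxu
      have hscal : u ^ c = c * u ^ (c - 1) * (θ * u) := by
        have : u ^ c = u ^ (c - 1) * u := by
          rw [← Real.rpow_add_one (ne_of_gt hu0)]; ring_nf
        rw [this]
        field_simp [hcdef]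
        rw [hcdef]; field_simp
      have : (u ^ c) • deriv x u + (c * u ^ (c - 1)) • (x u - a)
          = (c * u ^ (c - 1)) • (x u - a + (θ * u) • deriv x u) := by
        rw [smul_add, smul_smul, ← hscal, add_comm]
      rw [this] at h1
      exact h1.hasDerivWithinAt
    have hBc : ContinuousOn B (Set.Icc s T) := by
      apply continuousOn_const.add
      apply continuousOn_const.mul
      apply ContinuousOn.sub _ continuousOn_const
      intro u hu
      exact (Real.continuousAt_rpow_const u c
        (Or.inl (ne_of_gt (hupos u hu)))).continuousWithinAt
    have hB' : ∀ u ∈ Set.Ico s T, HasDerivWithinAt B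
        (Real.sqrt D₀ * (c * u ^ (c - 1))) (Set.Ici u) u := by
      intro u hu
      exact ((((hrpow_deriv u hu).sub_const _).const_mul _).const_add _).hasDerivWithinAt
    have hbnd : ∀ u ∈ Set.Ico s T,
        ‖(c * u ^ (c - 1)) • (x u - a + (θ * u) • deriv x u)‖
          ≤ Real.sqrt D₀ * (c * u ^ (c - 1)) := by
      intro u hu
      have hu0 : (0:ℝ) < u := hupos u ⟨hu.1, le_of_lt hu.2⟩
      have hco : 0 ≤ c * u ^ (c - 1) := by positivity
      rw [norm_smul, Real.norm_eq_abs, abs_of_nonneg hco, mul_comm]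
      exact mul_le_mul_of_nonneg_right (hsq u (le_trans (le_of_lt hst) hu.1)) hco
    have hfa : ‖f s‖ ≤ B s := by
      simp [hfdef, hBdef, norm_smul, Real.norm_eq_abs,
        abs_of_nonneg (Real.rpow_nonneg (le_of_lt hs0) c), mul_comm]
    have hmain := image_norm_le_of_norm_deriv_right_le_deriv_boundary' hfc hf' hfa hBc hB' hbnd
      (Set.right_mem_Icc.2 hT)
    -- hmain : ‖f T‖ ≤ B T
    have hT0 : (0:ℝ) < T := lt_of_lt_of_le hs0 hT
    have hTc : (0:ℝ) < T ^ c := Real.rpow_pos_of_pos hT0 c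
    have hsc : (0:ℝ) < s ^ c := Real.rpow_pos_of_pos hs0 c
    have hscle : s ^ c ≤ T ^ c := Real.rpow_le_rpow (le_of_lt hs0) hT (le_of_lt hc0)
    have hfT : ‖f T‖ = T ^ c * ‖x T - a‖ := by
      simp [hfdef, norm_smul, Real.norm_eq_abs, abs_of_nonneg (le_of_lt hTc)]
    rw [hfT] at hmain
    have : T ^ c * ‖x T - a‖ ≤ T ^ c * (‖x s - a‖ + Real.sqrt D₀) := by
      calc T ^ c * ‖x T - a‖ ≤ ‖x s - a‖ * s ^ c + Real.sqrt D₀ * (T ^ c - s ^ c) := hmain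
        _ ≤ ‖x s - a‖ * T ^ c + Real.sqrt D₀ * T ^ c := by
            have h1 : ‖x s - a‖ * s ^ c ≤ ‖x s - a‖ * T ^ c :=
              mul_le_mul_of_nonneg_left hscle (norm_nonneg _)
            nlinarith [Real.sqrt_nonneg D₀, hsc]
        _ = T ^ c * (‖x s - a‖ + Real.sqrt D₀) := by ring
    exact le_of_mul_le_mul_left this hTc
  -- conclude
  refine ⟨‖a‖ + K + Real.sqrt D₀, fun T hT => ?_⟩
  have hK0 : 0 ≤ K := le_trans (norm_nonneg _) (hK t₀ ⟨le_refl _, le_of_lt hst⟩)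
  have htri : ‖x T‖ ≤ ‖x T - a‖ + ‖a‖ := by
    have := norm_add_le (x T - a) a; simpa using this
  rcases le_or_gt T s with h | h
  · have := hK T ⟨hT, h⟩
    linarith
  · have h1 := key T (le_of_lt h)
    have h2 := hK s ⟨le_of_lt hst, le_refl _⟩
    linarith
end

section
/- Suppose s > 0, ζ : [s, ∞) → [0, ∞) is a nonnegative continuous function with ∫_s^∞ ζ(τ) dτ < ∞, and φ : [s, ∞) → (0, ∞) is a nondecreasing function with lim_{t→∞} φ(t) = +∞. Then lim_{t→∞} (1/φ(t)) ∫_s^t φ(τ) ζ(τ) dτ = 0. -/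
open MeasureTheory Filter

/-- Lemma A.3 / Lemma `limit`: if `s > 0`, `ζ` is a nonnegative
continuous integrable function on `[s, ∞)` and `φ : [s, ∞) → (0, ∞)` is nondecreasing
with `φ(t) → ∞`, then `(1/φ(t)) ∫_s^t φ(τ) ζ(τ) dτ → 0` as `t → ∞`. -/
theorem stmt_1 (s : ℝ) (hs : 0 < s) (ζ φ : ℝ → ℝ)
    (hζ0 : ∀ t ∈ Set.Ici s, 0 ≤ ζ t)
    (hζc : ContinuousOn ζ (Set.Ici s))
    (hζint : IntegrableOn ζ (Set.Ici s))
    (hφpos : ∀ t ∈ Set.Ici s, 0 < φ t)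
    (hφmono : MonotoneOn φ (Set.Ici s))
    (hφtop : Tendsto φ atTop atTop) :
    Tendsto (fun t => (1 / φ t) * ∫ τ in s..t, φ τ * ζ τ) atTop (nhds 0) := by
  -- integrability facts
  have hζIcc : ∀ a b : ℝ, s ≤ a → IntegrableOn ζ (Set.Icc a b) := fun a b ha =>
    hζint.mono_set (fun x hx => le_trans ha hx.1)
  have hprod : ∀ a b : ℝ, s ≤ a → IntegrableOn (fun τ => φ τ * ζ τ) (Set.Icc a b) := by
    intro a b ha
    rcases le_or_gt a b with hab | hab
    · have hsub : Set.Icc a b ⊆ Set.Ici s := fun x hx => le_trans ha hx.1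
      have hφi : IntegrableOn φ (Set.Icc a b) :=
        (hφmono.mono hsub).integrableOn_isCompact isCompact_Icc
      refine (hζIcc a b ha).bdd_mul (c := φ b) hφi.aestronglyMeasurable ?_
      rw [ae_restrict_iff' measurableSet_Icc]
      refine ae_of_all _ fun x hx => ?_
      rw [Real.norm_eq_abs, abs_of_pos (hφpos x (hsub hx))]
      exact hφmono (hsub hx) (le_trans ha hab) hx.2
    · simp [Set.Icc_eq_empty_of_lt hab, IntegrableOn]
  have hII : ∀ a b : ℝ, s ≤ a → a ≤ b → IntervalIntegrable (fun τ => φ τ * ζ τ)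
      MeasureTheory.volume a b := fun a b ha hab =>
    (intervalIntegrable_iff_integrableOn_Icc_of_le hab).2 (hprod a b ha)
  have hζII : ∀ a b : ℝ, s ≤ a → a ≤ b → IntervalIntegrable ζ MeasureTheory.volume a b :=
    fun a b ha hab => (intervalIntegrable_iff_integrableOn_Icc_of_le hab).2 (hζIcc a b ha)
  set I := ∫ τ in Set.Ioi s, ζ τ with hIdef
  have hζIoi : IntegrableOn ζ (Set.Ioi s) := hζint.mono_set Set.Ioi_subset_Ici_self
  have htend : Tendsto (fun t => ∫ τ in s..t, ζ τ) atTop (nhds I) :=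
    MeasureTheory.intervalIntegral_tendsto_integral_Ioi s hζIoi tendsto_id
  have hle_I : ∀ t, s ≤ t → (∫ τ in s..t, ζ τ) ≤ I := by
    intro t ht
    rw [intervalIntegral.integral_of_le ht]
    apply setIntegral_mono_set hζIoi
    · filter_upwards [ae_restrict_mem measurableSet_Ioi] with x hx
      exact hζ0 x (Set.Ioi_subset_Ici_self hx)
    · exact HasSubset.Subset.eventuallyLE Set.Ioc_subset_Ioi_self
  rw [NormedAddCommGroup.tendsto_nhds_zero]
  intro ε hε
  -- choose T with small tail
  have h1 : ∀ᶠ T in atTop, I - ε/3 < ∫ τ in s..T, ζ τ :=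
    htend.eventually (eventually_gt_nhds (by linarith))
  obtain ⟨T, hT1, hTs⟩ := (h1.and (eventually_ge_atTop s)).exists
  set C := ∫ τ in s..T, φ τ * ζ τ with hCdef
  have hC0 : 0 ≤ C := intervalIntegral.integral_nonneg hTs fun u hu =>
    mul_nonneg (hφpos u hu.1).le (hζ0 u hu.1)
  have hC' : Tendsto (fun t => C * (φ t)⁻¹) atTop (nhds 0) := by
    simpa using (tendsto_inv_atTop_zero.comp hφtop).const_mul C
  have h2 : ∀ᶠ t in atTop, C * (φ t)⁻¹ < ε/3 :=
    hC'.eventually (eventually_lt_nhds (by linarith))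
  filter_upwards [h2, eventually_ge_atTop T] with t h2t hTt
  have hst : s ≤ t := hTs.trans hTt
  have hφt : 0 < φ t := hφpos t hst
  have hinv : 0 < (φ t)⁻¹ := inv_pos.2 hφt
  set M := ∫ τ in T..t, φ τ * ζ τ with hMdef
  set N := ∫ τ in T..t, ζ τ with hNdef
  have hsplit : (∫ τ in s..t, φ τ * ζ τ) = C + M :=
    (intervalIntegral.integral_add_adjacent_intervals (hII s T le_rfl hTs) (hII T t hTs hTt)).symm
  have hmid : M ≤ φ t * N := by
    rw [hNdef, ← intervalIntegral.integral_const_mul]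
    refine intervalIntegral.integral_mono_on hTt (hII T t hTs hTt)
      ((hζII T t hTs hTt).const_mul _) fun x hx => ?_
    exact mul_le_mul_of_nonneg_right (hφmono (hTs.trans hx.1) hst hx.2) (hζ0 x (hTs.trans hx.1))
  have htail : N < ε/3 := by
    have hadd := intervalIntegral.integral_add_adjacent_intervals
      (hζII s T le_rfl hTs) (hζII T t hTs hTt)
    have h3 := hle_I t hst
    rw [hNdef]
    linarith
  have hnn : 0 ≤ ∫ τ in s..t, φ τ * ζ τ := intervalIntegral.integral_nonneg hst fun u hu =>
    mul_nonneg (hφpos u hu.1).le (hζ0 u hu.1)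
  rw [Real.norm_eq_abs, abs_of_nonneg (mul_nonneg (by positivity) hnn), hsplit]
  have hMN : (1 / φ t) * M ≤ N := by
    rw [one_div]
    calc (φ t)⁻¹ * M ≤ (φ t)⁻¹ * (φ t * N) := mul_le_mul_of_nonneg_left hmid hinv.le
      _ = N := by field_simp
  have hexp : (1 / φ t) * (C + M) = C * (φ t)⁻¹ + (1 / φ t) * M := by
    field_simp
  rw [hexp]
  linarith
end

section
/- Let f : ℝⁿ → ℝ and g : ℝᵐ → ℝ be differentiable convex functions whose gradients ∇f and ∇g are both L-Lipschitz for some L > 0, let K : ℝⁿ → ℝᵐ be a linear map with adjoint K*, and let (x*, y*) be a saddle point of L, i.e. L(x*, y) ≤ L(x*, y*) ≤ L(x, y*) for all (x, y). Then for all x ∈ ℝⁿ and y ∈ ℝᵐ, L(x, y*) − L(x*, y) ≥ (1/(2L))‖∇f(x) − ∇f(x*)‖² + (1/(2L))‖∇g(y) − ∇g(y*)‖². -/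
open scoped RealInnerProductSpace
open InnerProductSpace

noncomputable section

variable {E : Type*} [NormedAddCommGroup E] [InnerProductSpace ℝ E] [CompleteSpace E]

lemma descent {L : ℝ} (hL : 0 < L) {f : E → ℝ} (hf : Differentiable ℝ f)
    (hLip : ∀ u v, ‖gradient f u - gradient f v‖ ≤ L * ‖u - v‖) (a b : E) :
    f b ≤ f a + ⟪gradient f a, b - a⟫ + L / 2 * ‖b - a‖ ^ 2 := by
  set d := b - a with hd
  have hlipg : LipschitzWith L.toNNReal (gradient f) := by
    apply LipschitzWith.of_dist_le_mul
    intro u v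
    simpa [dist_eq_norm, Real.coe_toNNReal L hL.le] using hLip u v
  have hline : ∀ t : ℝ, HasDerivAt (fun s : ℝ => a + s • d) d t := by
    intro t
    simpa using ((hasDerivAt_id t).smul_const d).const_add a
  have hderiv : ∀ t : ℝ, HasDerivAt (fun s : ℝ => f (a + s • d))
      ⟪gradient f (a + t • d), d⟫ t := by
    intro t
    have h1 := ((hf (a + t • d)).hasGradientAt).hasFDerivAt.comp_hasDerivAt t (hline t)
    simpa [toDual_apply_apply, Function.comp_def] using h1
  have hcont : Continuous fun t : ℝ => ⟪gradient f (a + t • d), d⟫ := by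
    exact (hlipg.continuous.comp (by continuity)).inner continuous_const
  have hFTC : f (a + (1:ℝ) • d) - f (a + (0:ℝ) • d)
      = ∫ t in (0:ℝ)..1, ⟪gradient f (a + t • d), d⟫ := by
    refine (intervalIntegral.integral_eq_sub_of_hasDerivAt (fun t _ => hderiv t) ?_).symm
    exact hcont.intervalIntegrable 0 1
  have hb : a + (1:ℝ) • d = b := by simp [hd]
  have ha : a + (0:ℝ) • d = a := by simp
  rw [hb, ha] at hFTC
  have hmono : (∫ t in (0:ℝ)..1, ⟪gradient f (a + t • d), d⟫)
      ≤ ∫ t in (0:ℝ)..1, (⟪gradient f a, d⟫ + L * ‖d‖ ^ 2 * t) := by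
    apply intervalIntegral.integral_mono_on (by norm_num)
      (hcont.intervalIntegrable 0 1)
      ((by continuity : Continuous fun t : ℝ => ⟪gradient f a, d⟫ + L * ‖d‖^2 * t).intervalIntegrable 0 1)
    intro t ht
    obtain ⟨ht0, ht1⟩ := Set.mem_Icc.mp ht
    have h1 : ⟪gradient f (a + t • d), d⟫ - ⟪gradient f a, d⟫
        = ⟪gradient f (a + t • d) - gradient f a, d⟫ := by
      rw [inner_sub_left]
    have h2 : ⟪gradient f (a + t • d) - gradient f a, d⟫
        ≤ ‖gradient f (a + t • d) - gradient f a‖ * ‖d‖ := real_inner_le_norm _ _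
    have h3 : ‖gradient f (a + t • d) - gradient f a‖ ≤ L * (t * ‖d‖) := by
      have := hLip (a + t • d) a
      simpa [norm_smul, abs_of_nonneg ht0] using this
    nlinarith [norm_nonneg d, norm_nonneg (gradient f (a + t • d) - gradient f a)]
  have hint : (∫ t in (0:ℝ)..1, (⟪gradient f a, d⟫ + L * ‖d‖ ^ 2 * t))
      = ⟪gradient f a, d⟫ + L / 2 * ‖d‖ ^ 2 := by
    rw [intervalIntegral.integral_add intervalIntegrable_const
      ((intervalIntegral.intervalIntegrable_id).const_mul _),
      intervalIntegral.integral_const, intervalIntegral.integral_const_mul, integral_id]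
    simp; ring
  rw [hint] at hmono
  linarith

lemma min_gap {L : ℝ} (hL : 0 < L) {f : E → ℝ} (hf : Differentiable ℝ f)
    (hLip : ∀ u v, ‖gradient f u - gradient f v‖ ≤ L * ‖u - v‖) {a : E}
    (hmin : ∀ z, f a ≤ f z) (b : E) :
    f a + 1 / (2 * L) * ‖gradient f b - gradient f a‖ ^ 2 ≤ f b := by
  have hga : gradient f a = 0 := by
    have hloc : IsLocalMin f a := Filter.Eventually.of_forall hmin
    rw [gradient, hloc.fderiv_eq_zero, map_zero]
  rw [hga, sub_zero]
  set w := b - (1 / L) • gradient f b with hw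
  have h1 := hmin w
  have h2 := descent hL hf hLip b w
  have h3 : ⟪gradient f b, w - b⟫ = -(1/L) * ‖gradient f b‖ ^ 2 := by
    rw [hw]
    simp [inner_smul_right, real_inner_self_eq_norm_sq]
  have h4 : ‖w - b‖ ^ 2 = (1/L)^2 * ‖gradient f b‖ ^ 2 := by
    rw [hw]
    simp [norm_smul]
    rw [abs_of_pos hL]
    ring
  rw [h3, h4] at h2
  have : f a ≤ f b + -(1/L) * ‖gradient f b‖^2 + L/2 * ((1/L)^2 * ‖gradient f b‖^2) :=
    le_trans h1 h2
  have hs : L/2 * ((1/L)^2 * ‖gradient f b‖^2) - (1/L) * ‖gradient f b‖^2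
      = -(1/(2*L)) * ‖gradient f b‖^2 := by
    field_simp
    ring
  linarith

end




open scoped RealInnerProductSpace

noncomputable section

/-- The bilinear Lagrangian `L(x, y) = f(x) + ⟨Kx, y⟩ - g(y)`. -/
def Lag {n m : ℕ} (f : EuclideanSpace ℝ (Fin n) → ℝ) (g : EuclideanSpace ℝ (Fin m) → ℝ)
    (K : EuclideanSpace ℝ (Fin n) →L[ℝ] EuclideanSpace ℝ (Fin m))
    (x : EuclideanSpace ℝ (Fin n)) (y : EuclideanSpace ℝ (Fin m)) : ℝ :=
  f x + ⟪K x, y⟫ - g y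

/-- estimate (new1): if `∇f` and `∇g` are `L`-Lipschitz and `(x*, y*)`
is a saddle point of `L`, then the primal-dual gap dominates
`(1/(2L))(‖∇f(x) − ∇f(x*)‖² + ‖∇g(y) − ∇g(y*)‖²)`. -/
theorem stmt_6 {n m : ℕ} (L : ℝ) (hL : 0 < L)
    (f : EuclideanSpace ℝ (Fin n) → ℝ) (g : EuclideanSpace ℝ (Fin m) → ℝ)
    (hf : Differentiable ℝ f) (hg : Differentiable ℝ g)
    (hfconv : ConvexOn ℝ Set.univ f) (hgconv : ConvexOn ℝ Set.univ g)
    (hfLip : ∀ u v, ‖gradient f u - gradient f v‖ ≤ L * ‖u - v‖)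
    (hgLip : ∀ u v, ‖gradient g u - gradient g v‖ ≤ L * ‖u - v‖)
    (K : EuclideanSpace ℝ (Fin n) →L[ℝ] EuclideanSpace ℝ (Fin m))
    (xs : EuclideanSpace ℝ (Fin n)) (ys : EuclideanSpace ℝ (Fin m))
    (hsaddle : ∀ x y, Lag f g K xs y ≤ Lag f g K xs ys ∧ Lag f g K xs ys ≤ Lag f g K x ys)
    (x : EuclideanSpace ℝ (Fin n)) (y : EuclideanSpace ℝ (Fin m)) :
    1 / (2 * L) * ‖gradient f x - gradient f xs‖ ^ 2
      + 1 / (2 * L) * ‖gradient g y - gradient g ys‖ ^ 2 ≤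
    Lag f g K x ys - Lag f g K xs y := by

  -- primal part
  set c1 : EuclideanSpace ℝ (Fin n) := ContinuousLinearMap.adjoint K ys with hc1
  set F : EuclideanSpace ℝ (Fin n) → ℝ := fun z => f z + ⟪c1, z⟫ with hF
  have hKz : ∀ z, ⟪K z, ys⟫ = ⟪c1, z⟫ := by
    intro z
    rw [hc1, ContinuousLinearMap.adjoint_inner_left, real_inner_comm]
  have hFgrad : ∀ z, HasGradientAt F (gradient f z + c1) z := by
    intro z
    rw [hasGradientAt_iff_hasFDerivAt, map_add]
    exact ((hf z).hasGradientAt.hasFDerivAt).add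
      (by exact (InnerProductSpace.toDual ℝ (EuclideanSpace ℝ (Fin n)) c1).hasFDerivAt)
  have hFgrad' : ∀ z, gradient F z = gradient f z + c1 := fun z => (hFgrad z).gradient
  have hFdiff : Differentiable ℝ F := fun z => (hFgrad z).differentiableAt
  have hFLip : ∀ u v, ‖gradient F u - gradient F v‖ ≤ L * ‖u - v‖ := by
    intro u v
    rw [hFgrad' u, hFgrad' v, add_sub_add_right_eq_sub]
    exact hfLip u v
  have hFmin : ∀ z, F xs ≤ F z := by
    intro z
    have h := (hsaddle z ys).2
    simp only [Lag, hKz] at h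
    simpa [hF] using h
  have h1 := min_gap hL hFdiff hFLip hFmin x
  rw [hFgrad' x, hFgrad' xs, add_sub_add_right_eq_sub] at h1
  -- dual part
  set c2 : EuclideanSpace ℝ (Fin m) := K xs with hc2
  set G : EuclideanSpace ℝ (Fin m) → ℝ := fun z => g z - ⟪c2, z⟫ with hG
  have hGgrad : ∀ z, HasGradientAt G (gradient g z - c2) z := by
    intro z
    rw [hasGradientAt_iff_hasFDerivAt, map_sub]
    exact ((hg z).hasGradientAt.hasFDerivAt).sub
      (by exact (InnerProductSpace.toDual ℝ (EuclideanSpace ℝ (Fin m)) c2).hasFDerivAt)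
  have hGgrad' : ∀ z, gradient G z = gradient g z - c2 := fun z => (hGgrad z).gradient
  have hGdiff : Differentiable ℝ G := fun z => (hGgrad z).differentiableAt
  have hGLip : ∀ u v, ‖gradient G u - gradient G v‖ ≤ L * ‖u - v‖ := by
    intro u v
    rw [hGgrad' u, hGgrad' v, sub_sub_sub_cancel_right]
    exact hgLip u v
  have hGmin : ∀ z, G ys ≤ G z := by
    intro z
    have h := (hsaddle xs z).1
    simp only [Lag] at h
    simp only [hG, hc2]
    linarith
  have h2 := min_gap hL hGdiff hGLip hGmin y
  rw [hGgrad' y, hGgrad' ys, sub_sub_sub_cancel_right] at h2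
  -- combine
  simp only [hF, hG, hc2] at h1 h2
  simp only [Lag]
  have e1 := hKz x
  have e2 := hKz xs
  linarith
end
end

section
/- Assume f : ℝⁿ → ℝ and g : ℝᵐ → ℝ are differentiable convex functions, α, β, ε : [t₀, ∞) → (0, ∞) are C¹, θ > 0 and t₀ > 0 are constants, K : ℝⁿ → ℝᵐ is linear with adjoint K*, α(t) ≥ (1 + θ)/(θ t), β′(t)/β(t) ≤ (1 − 2θ)/(θ t), and α(t) + tα′(t) ≤ tβ(t)ε(t) for all t ≥ t₀, ε is nonincreasing with ∫_{t₀}^∞ tβ(t)ε(t) dt < ∞, and lim_{t→∞} t²β(t) = +∞. Then every twice continuously differentiable global solution (x(t), y(t)) of the dynamical system (15) is bounded on [t₀, ∞). -/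
set_option maxHeartbeats 2000000

open scoped RealInnerProductSpace Topology
open MeasureTheory Filter Asymptotics

noncomputable section

section Helpers
open scoped Topology
open Set

lemma grad_ineq {E : Type*} [NormedAddCommGroup E] [InnerProductSpace ℝ E] [CompleteSpace E]
    {f : E → ℝ} (hf : Differentiable ℝ f) (hc : ConvexOn ℝ Set.univ f) (a b : E) :
    f a + ⟪gradient f a, b - a⟫ ≤ f b := by
  have hgrad : ∀ w : E, ⟪gradient f a, w⟫ = fderiv ℝ f a w := by
    intro w
    rw [gradient]
    exact InnerProductSpace.toDual_symm_apply
  have hφ : HasDerivAt (fun s : ℝ => f (a + s • (b - a))) (fderiv ℝ f a (b - a)) 0 := by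
    have hline : HasDerivAt (fun s : ℝ => a + s • (b - a)) (b - a) 0 := by
      simpa using (((hasDerivAt_id (0:ℝ)).smul_const (b - a)).const_add a)
    have := (hf (a + (0:ℝ) • (b - a))).hasFDerivAt.comp_hasDerivAt 0 hline
    rw [zero_smul, add_zero] at this; exact this
  have hslope : ∀ s : ℝ, s ∈ Set.Ioo (0:ℝ) 1 →
      slope (fun s : ℝ => f (a + s • (b - a))) 0 s ≤ f b - f a := by
    intro s hs
    have hcomb : a + s • (b - a) = (1 - s) • a + s • b := by
      rw [smul_sub]; module
    have h2 := hc.2 (Set.mem_univ a) (Set.mem_univ b) (by linarith [hs.2] : (0:ℝ) ≤ 1 - s)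
      (le_of_lt hs.1) (by ring)
    rw [smul_eq_mul, smul_eq_mul] at h2
    rw [slope_def_field, sub_zero, div_le_iff₀ hs.1]
    have : f (a + s • (b - a)) ≤ (1 - s) * f a + s * f b := by rw [hcomb]; exact h2
    have h0 : f (a + (0:ℝ) • (b - a)) = f a := by simp
    rw [h0]; nlinarith
  have htend : Tendsto (slope (fun s : ℝ => f (a + s • (b - a))) 0) (𝓝[>] 0)
      (𝓝 (fderiv ℝ f a (b - a))) :=
    ((hasDerivAt_iff_tendsto_slope.mp hφ).mono_left (nhdsWithin_mono _ (fun z hz => ne_of_gt hz)))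
  have : fderiv ℝ f a (b - a) ≤ f b - f a := by
    refine le_of_tendsto htend ?_
    filter_upwards [Ioo_mem_nhdsGT_of_mem (by norm_num : (0:ℝ) ∈ Set.Ico (0:ℝ) 1)] with s hs
    exact hslope s hs
  rw [hgrad]; linarith

lemma key_ineq {E₁ E₂ : Type*} [NormedAddCommGroup E₁] [InnerProductSpace ℝ E₁] [CompleteSpace E₁]
    [NormedAddCommGroup E₂] [InnerProductSpace ℝ E₂] [CompleteSpace E₂]
    (K : E₁ →L[ℝ] E₂) (xs X X' X'' Gf : E₁) (ys Y Y' Y'' Gg : E₂)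
    (θ t A B Ep A' B' Ep' FX Fxs GY Gys : ℝ)
    (hode1 : X'' + A • X' + B • (Gf + Ep • X + (ContinuousLinearMap.adjoint K) (Y + (θ * t) • Y')) = 0)
    (hode2 : Y'' + A • Y' - B • (K (X + (θ * t) • X') - Gg - Ep • Y) = 0)
    (hfi : FX - Fxs ≤ ⟪Gf, X - xs⟫)
    (hgi : GY - Gys ≤ ⟪Gg, Y - ys⟫)
    (hsad : 0 ≤ (FX + ⟪K X, ys⟫ - Gys) - (Fxs + ⟪K xs, Y⟫ - GY))
    (ht : 0 < t) (hθ : 0 < θ) (hB : 0 < B) (hEp : 0 < Ep) (hEp' : Ep' ≤ 0)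
    (hσ : 0 ≤ θ * t * A - (1 + θ))
    (hσ' : θ * (A + t * A') ≤ θ * t * B * Ep)
    (hββ : θ ^ 2 * (2 * t * B + t ^ 2 * B') ≤ θ * t * B) :
    θ ^ 2 * (2 * t * B + t ^ 2 * B') *
        (FX + ⟪K X, ys⟫ - Gys - (Fxs + ⟪K xs, Y⟫ - GY) + Ep / 2 * (⟪X, X⟫ + ⟪Y, Y⟫))
      + θ ^ 2 * t ^ 2 * B *
        (⟪Gf, X'⟫ + ⟪K X', ys⟫ - ⟪K xs, Y'⟫ + ⟪Gg, Y'⟫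
          + Ep' / 2 * (⟪X, X⟫ + ⟪Y, Y⟫) + Ep * (⟪X, X'⟫ + ⟪Y, Y'⟫))
      + ⟪(1 + θ) • X' + (θ * t) • X'', X - xs + (θ * t) • X'⟫
      + ⟪(1 + θ) • Y' + (θ * t) • Y'', Y - ys + (θ * t) • Y'⟫
      + (θ * A + θ * t * A') / 2 * (⟪X - xs, X - xs⟫ + ⟪Y - ys, Y - ys⟫)
      + (θ * t * A - (1 + θ)) * (⟪X', X - xs⟫ + ⟪Y', Y - ys⟫)
      ≤ θ / 2 * (t * B * Ep) * (⟪xs, xs⟫ + ⟪ys, ys⟫) := by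
  have hX2 : X'' = -(A • X') - B • (Gf + Ep • X + (ContinuousLinearMap.adjoint K) (Y + (θ * t) • Y')) := by
    linear_combination (norm := module) hode1
  have hY2 : Y'' = -(A • Y') + B • (K (X + (θ * t) • X') - Gg - Ep • Y) := by
    linear_combination (norm := module) hode2
  subst hX2 hY2
  have i1' : (FX + ⟪K X, ys⟫ - Gys - (Fxs + ⟪K xs, Y⟫ - GY) + Ep / 2 * (⟪X, X⟫ + ⟪Y, Y⟫))
      - Ep / 2 * (⟪xs, xs⟫ + ⟪ys, ys⟫)
      + Ep / 2 * (⟪X - xs, X - xs⟫ + ⟪Y - ys, Y - ys⟫)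
      ≤ (⟪Gf, X - xs⟫ + Ep * ⟪X, X - xs⟫ + ⟪ys, K (X - xs)⟫)
        - (⟪K xs, Y - ys⟫ - ⟪Gg, Y - ys⟫ - Ep * ⟪Y, Y - ys⟫) := by
    simp only [inner_sub_left, inner_sub_right, _root_.map_sub, real_inner_comm] at hfi hgi ⊢
    linarith [hfi, hgi]
  have hab : (0:ℝ) ≤ θ * t * B := by positivity
  have P5 := mul_le_mul_of_nonneg_left i1' hab
  have nX : (0:ℝ) ≤ ⟪X, X⟫ := real_inner_self_nonneg
  have nY : (0:ℝ) ≤ ⟪Y, Y⟫ := real_inner_self_nonneg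
  have nu : (0:ℝ) ≤ ⟪X - xs, X - xs⟫ := real_inner_self_nonneg
  have nv : (0:ℝ) ≤ ⟪Y - ys, Y - ys⟫ := real_inner_self_nonneg
  have nX' : (0:ℝ) ≤ ⟪X', X'⟫ := real_inner_self_nonneg
  have nY' : (0:ℝ) ≤ ⟪Y', Y'⟫ := real_inner_self_nonneg
  have P1 : (θ ^ 2 * (2 * t * B + t ^ 2 * B') - θ * t * B) *
      (FX + ⟪K X, ys⟫ - Gys - (Fxs + ⟪K xs, Y⟫ - GY) + Ep / 2 * (⟪X, X⟫ + ⟪Y, Y⟫)) ≤ 0 := by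
    apply mul_nonpos_of_nonpos_of_nonneg
    · linarith
    · have h1 : 0 ≤ Ep / 2 * (⟪X, X⟫ + ⟪Y, Y⟫) := mul_nonneg (by linarith) (by linarith)
      linarith
  have P2 : θ ^ 2 * t ^ 2 * B * (Ep' / 2) * (⟪X, X⟫ + ⟪Y, Y⟫) ≤ 0 := by
    apply mul_nonpos_of_nonpos_of_nonneg
    · have h2 : 0 ≤ θ ^ 2 * t ^ 2 * B := by positivity
      nlinarith
    · linarith
  have P3 : (θ * A + θ * t * A' - θ * t * B * Ep) / 2 *
      (⟪X - xs, X - xs⟫ + ⟪Y - ys, Y - ys⟫) ≤ 0 := by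
    apply mul_nonpos_of_nonpos_of_nonneg
    · nlinarith
    · linarith
  have P4 : (0:ℝ) ≤ (θ * t * A - (1 + θ)) * (θ * t) * (⟪X', X'⟫ + ⟪Y', Y'⟫) := by
    apply mul_nonneg (mul_nonneg hσ (by positivity)) (by linarith)
  simp only [inner_add_left, inner_add_right, inner_sub_left, inner_sub_right,
    inner_neg_left, inner_neg_right, real_inner_smul_left, real_inner_smul_right,
    _root_.map_add, _root_.map_smul, _root_.map_sub, _root_.map_neg,
    ContinuousLinearMap.adjoint_inner_left,
    ContinuousLinearMap.adjoint_inner_right, inner_zero_left, inner_zero_right,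
    real_inner_comm] at P1 P2 P3 P4 P5 ⊢
  linarith [P1, P2, P3, P4, P5]

lemma c2_facts {E : Type*} [NormedAddCommGroup E] [NormedSpace ℝ E] {x : ℝ → E} {t₀ : ℝ}
    (hx : ContDiffOn ℝ 2 x (Set.Ici t₀)) :
    (∀ s ∈ Set.Ioi t₀, HasDerivAt x (deriv x s) s) ∧
    (∀ s ∈ Set.Ioi t₀, HasDerivAt (deriv x) (deriv (deriv x) s) s) ∧
    ContinuousOn (deriv x) (Set.Ioi t₀) := by
  have hnh : ∀ s ∈ Set.Ioi t₀, Set.Ici t₀ ∈ 𝓝 s := fun s hs =>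
    mem_nhds_iff.2 ⟨Set.Ioi t₀, Set.Ioi_subset_Ici_self, isOpen_Ioi, hs⟩
  have hnh' : ∀ s ∈ Set.Ioi t₀, Set.Ioi t₀ ∈ 𝓝 s := fun s hs =>
    mem_nhds_iff.2 ⟨Set.Ioi t₀, subset_rfl, isOpen_Ioi, hs⟩
  have h1 : ∀ s ∈ Set.Ioi t₀, HasDerivAt x (deriv x s) s := by
    intro s hs
    exact ((hx.differentiableOn (by norm_num) s (Set.Ioi_subset_Ici_self hs)).differentiableAt
      (hnh s hs)).hasDerivAt
  have hx' : ContDiffOn ℝ 1 (derivWithin x (Set.Ici t₀)) (Set.Ici t₀) :=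
    hx.derivWithin (uniqueDiffOn_Ici t₀) (by norm_num)
  have heq : Set.EqOn (deriv x) (derivWithin x (Set.Ici t₀)) (Set.Ioi t₀) := by
    intro s hs
    exact (derivWithin_of_mem_nhds (hnh s hs)).symm
  refine ⟨h1, ?_, ?_⟩
  · intro s hs
    have hev : deriv x =ᶠ[𝓝 s] derivWithin x (Set.Ici t₀) :=
      eventually_of_mem (hnh' s hs) heq
    have hdd : HasDerivAt (derivWithin x (Set.Ici t₀))
        (deriv (derivWithin x (Set.Ici t₀)) s) s :=
      ((hx'.differentiableOn (by norm_num) s (Set.Ioi_subset_Ici_self hs)).differentiableAt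
        (hnh s hs)).hasDerivAt
    have h2 := hdd.congr_of_eventuallyEq hev
    rwa [hev.deriv_eq]
  · exact (hx'.continuousOn.mono Set.Ioi_subset_Ici_self).congr heq

lemma c1_facts {α : ℝ → ℝ} {t₀ : ℝ} (hα : ContDiffOn ℝ 1 α (Set.Ici t₀)) :
    ∀ s ∈ Set.Ioi t₀, HasDerivAt α (deriv α s) s := by
  intro s hs
  have hnh : Set.Ici t₀ ∈ 𝓝 s :=
    mem_nhds_iff.2 ⟨Set.Ioi t₀, Set.Ioi_subset_Ici_self, isOpen_Ioi, hs⟩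
  exact ((hα.differentiableOn (by norm_num) s (Set.Ioi_subset_Ici_self hs)).differentiableAt hnh).hasDerivAt

lemma bound_from_p {E : Type*} [NormedAddCommGroup E] [NormedSpace ℝ E] [CompleteSpace E]
    (θ t₁ : ℝ) (hθ : 0 < θ) (ht₁ : 0 < t₁) (u u' : ℝ → E)
    (hu : ∀ s ∈ Set.Ici t₁, HasDerivAt u (u' s) s)
    (hu'c : ContinuousOn u' (Set.Ici t₁))
    (Cp : ℝ) (hCp : ∀ s ∈ Set.Ici t₁, ‖u s + (θ * s) • u' s‖ ≤ Cp) :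
    ∀ t ∈ Set.Ici t₁, ‖u t‖ ≤ ‖u t₁‖ + Cp := by
  intro t ht
  rw [Set.mem_Ici] at ht
  have hCp0 : 0 ≤ Cp := le_trans (norm_nonneg _) (hCp t₁ Set.self_mem_Ici)
  set r : ℝ := 1 / θ with hr
  have hr0 : 0 < r := by positivity
  set w : ℝ → E := fun s => (s ^ r : ℝ) • u s with hw
  set w' : ℝ → E := fun s => ((r * s ^ (r - 1)) * (θ * s)) • u' s + (r * s ^ (r - 1)) • u s
    with hw'
  have hpos : ∀ s : ℝ, s ∈ Set.Icc t₁ t → 0 < s := fun s hs => lt_of_lt_of_le ht₁ hs.1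
  have hsr : ∀ s : ℝ, 0 < s → (r * s ^ (r - 1)) * (θ * s) = s ^ r := by
    intro s hs0
    have h5 : s ^ (r - 1) * s = s ^ r := by
      nth_rewrite 2 [← Real.rpow_one s]
      rw [← Real.rpow_add hs0]
      ring_nf
    calc (r * s ^ (r - 1)) * (θ * s) = (r * θ) * (s ^ (r - 1) * s) := by ring
      _ = s ^ r := by rw [h5, hr]; field_simp
  have hwd : ∀ s ∈ Set.Icc t₁ t, HasDerivAt w (w' s) s := by
    intro s hs
    have hs0 : (0:ℝ) < s := hpos s hs
    have h1 : HasDerivAt (fun z : ℝ => z ^ r) (r * s ^ (r - 1)) s :=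
      Real.hasDerivAt_rpow_const (Or.inl (ne_of_gt hs0))
    have h2 := h1.smul (hu s hs.1)
    have h3 : w' s = (s ^ r) • u' s + (r * s ^ (r - 1)) • u s := by
      simp only [hw']
      rw [hsr s hs0]
    rw [h3]
    exact h2
  have hw'norm : ∀ s ∈ Set.Icc t₁ t, ‖w' s‖ ≤ Cp * (r * s ^ (r - 1)) := by
    intro s hs
    have hs0 : (0:ℝ) < s := hpos s hs
    have hcoef : 0 ≤ r * s ^ (r - 1) := by positivity
    have : w' s = (r * s ^ (r - 1)) • (u s + (θ * s) • u' s) := by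
      rw [hw', smul_add, smul_smul, add_comm]
    rw [this, norm_smul, Real.norm_eq_abs, abs_of_nonneg hcoef]
    nlinarith [mul_le_mul_of_nonneg_left (hCp s hs.1) hcoef]
  have hw'c : ContinuousOn w' (Set.Icc t₁ t) := by
    have hrp : ContinuousOn (fun s : ℝ => r * s ^ (r - 1)) (Set.Icc t₁ t) := by
      apply ContinuousOn.mul continuousOn_const
      intro s hs
      exact (Real.continuousAt_rpow_const s (r - 1)
        (Or.inl (ne_of_gt (hpos s hs)))).continuousWithinAt
    apply ContinuousOn.add
    · exact ((hrp.mul (continuousOn_const.mul continuousOn_id)).smul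
        (hu'c.mono (fun s hs => hs.1)))
    · exact hrp.smul (fun s hs => ((hu s hs.1).continuousAt).continuousWithinAt)
  rcases eq_or_lt_of_le ht with htt | ht1t
  · rw [← htt]; linarith [norm_nonneg (u t₁)]
  have hftc : ∫ s in t₁..t, w' s = w t - w t₁ := by
    apply intervalIntegral.integral_eq_sub_of_hasDerivAt
    · intro s hs
      rw [Set.uIcc_of_le (le_of_lt ht1t)] at hs
      exact hwd s hs
    · apply ContinuousOn.intervalIntegrable
      rwa [Set.uIcc_of_le (le_of_lt ht1t)]
  have hintb : IntervalIntegrable (fun s : ℝ => Cp * (r * s ^ (r - 1))) MeasureTheory.volume t₁ t := by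
    apply ContinuousOn.intervalIntegrable
    rw [Set.uIcc_of_le (le_of_lt ht1t)]
    apply ContinuousOn.mul continuousOn_const
    apply ContinuousOn.mul continuousOn_const
    intro s hs
    exact (Real.continuousAt_rpow_const s (r - 1)
      (Or.inl (ne_of_gt (hpos s hs)))).continuousWithinAt
  have hbound : ‖w t - w t₁‖ ≤ Cp * (t ^ r - t₁ ^ r) := by
    rw [← hftc]
    have h1 := intervalIntegral.norm_integral_le_abs_of_norm_le (f := w')
      (g := fun s => Cp * (r * s ^ (r - 1))) (a := t₁) (b := t) ?_ hintb
    · refine le_trans h1 ?_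
      have h2 : ∫ s in t₁..t, Cp * (r * s ^ (r - 1))
          = Cp * r * ((t ^ r - t₁ ^ r) / r) := by
        rw [intervalIntegral.integral_const_mul]
        rw [intervalIntegral.integral_const_mul]
        rw [integral_rpow]
        · rw [sub_add_cancel]
          ring
        · right
          constructor
          · intro hcon
            rw [sub_eq_neg_self] at hcon
            exact (ne_of_gt hr0) hcon
          · rw [Set.uIcc_of_le (le_of_lt ht1t)]
            intro hcon
            exact absurd (hpos 0 hcon) (lt_irrefl 0)
      rw [h2]
      have hmono : t₁ ^ r ≤ t ^ r :=
        Real.rpow_le_rpow (le_of_lt ht₁) (le_of_lt ht1t) (le_of_lt hr0)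
      rw [abs_of_nonneg (mul_nonneg (mul_nonneg hCp0 hr0.le) (div_nonneg (sub_nonneg.2 hmono) hr0.le))]
      rw [mul_assoc, mul_div_cancel₀ _ (ne_of_gt hr0)]
    · rw [MeasureTheory.ae_restrict_iff' measurableSet_uIoc]
      filter_upwards with s hs
      rw [Set.uIoc_of_le (le_of_lt ht1t)] at hs
      exact hw'norm s ⟨le_of_lt hs.1, hs.2⟩
  have htr : (0:ℝ) < t ^ r := Real.rpow_pos_of_pos (lt_trans ht₁ ht1t) r
  have ht1r : (0:ℝ) < t₁ ^ r := Real.rpow_pos_of_pos ht₁ r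
  have hmono : t₁ ^ r ≤ t ^ r :=
    Real.rpow_le_rpow (le_of_lt ht₁) (le_of_lt ht1t) (le_of_lt hr0)
  have hwt : ‖w t‖ = t ^ r * ‖u t‖ := by
    rw [hw]
    rw [norm_smul, Real.norm_eq_abs, abs_of_pos htr]
  have hwt1 : ‖w t₁‖ = t₁ ^ r * ‖u t₁‖ := by
    rw [hw]
    rw [norm_smul, Real.norm_eq_abs, abs_of_pos ht1r]
  have h6 : ‖w t‖ ≤ ‖w t₁‖ + Cp * (t ^ r - t₁ ^ r) := by
    have := norm_sub_norm_le (w t) (w t₁)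
    linarith
  rw [hwt, hwt1] at h6
  have h7 : t ^ r * ‖u t‖ ≤ t ^ r * ‖u t₁‖ + Cp * t ^ r := by
    nlinarith [norm_nonneg (u t₁)]
  nlinarith [norm_nonneg (u t)]

end Helpers

/-- `(x*, y*)` is a saddle point of the Lagrangian `L`:
`L(x*, y) ≤ L(x*, y*) ≤ L(x, y*)` for all `(x, y)`. -/
def IsSaddle {n m : ℕ} (f : EuclideanSpace ℝ (Fin n) → ℝ) (g : EuclideanSpace ℝ (Fin m) → ℝ)
    (K : EuclideanSpace ℝ (Fin n) →L[ℝ] EuclideanSpace ℝ (Fin m))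
    (xs : EuclideanSpace ℝ (Fin n)) (ys : EuclideanSpace ℝ (Fin m)) : Prop :=
  ∀ x y, Lag f g K xs y ≤ Lag f g K xs ys ∧ Lag f g K xs ys ≤ Lag f g K x ys

/-- `(x, y)` is a twice continuously differentiable global solution on `[t₀, ∞)` of the
Tikhonov regularized second-order primal-dual dynamical system (15):
`ẍ + α(t)ẋ + β(t)[∇f(x) + ε(t)x + K*(y + θtẏ)] = 0`,
`ÿ + α(t)ẏ − β(t)[K(x + θtẋ) − ∇g(y) − ε(t)y] = 0`. -/
def IsSol {n m : ℕ} (t₀ θ : ℝ)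
    (f : EuclideanSpace ℝ (Fin n) → ℝ) (g : EuclideanSpace ℝ (Fin m) → ℝ)
    (K : EuclideanSpace ℝ (Fin n) →L[ℝ] EuclideanSpace ℝ (Fin m))
    (α β ε : ℝ → ℝ)
    (x : ℝ → EuclideanSpace ℝ (Fin n)) (y : ℝ → EuclideanSpace ℝ (Fin m)) : Prop :=
  ContDiffOn ℝ 2 x (Set.Ici t₀) ∧ ContDiffOn ℝ 2 y (Set.Ici t₀) ∧
  ∀ t ≥ t₀,
    deriv (deriv x) t + α t • deriv x t
      + β t • (gradient f (x t) + ε t • x t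
        + (ContinuousLinearMap.adjoint K) (y t + (θ * t) • deriv y t)) = 0 ∧
    deriv (deriv y) t + α t • deriv y t
      - β t • (K (x t + (θ * t) • deriv x t) - gradient g (y t) - ε t • y t) = 0

/-- Theorem 3.1, boundedness: under the fast-decay condition
`∫ tβ(t)ε(t) dt < ∞` and the parameter conditions, every global solution of (15)
is bounded on `[t₀, ∞)`. -/
theorem stmt_8 {n m : ℕ} (t₀ θ : ℝ) (ht₀ : 0 < t₀) (hθ : 0 < θ)
    (f : EuclideanSpace ℝ (Fin n) → ℝ) (g : EuclideanSpace ℝ (Fin m) → ℝ)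
    (hf : Differentiable ℝ f) (hg : Differentiable ℝ g)
    (hfconv : ConvexOn ℝ Set.univ f) (hgconv : ConvexOn ℝ Set.univ g)
    (K : EuclideanSpace ℝ (Fin n) →L[ℝ] EuclideanSpace ℝ (Fin m))
    (α β ε : ℝ → ℝ)
    (hαC1 : ContDiffOn ℝ 1 α (Set.Ici t₀)) (hβC1 : ContDiffOn ℝ 1 β (Set.Ici t₀))
    (hεC1 : ContDiffOn ℝ 1 ε (Set.Ici t₀))
    (hαpos : ∀ t ≥ t₀, 0 < α t) (hβpos : ∀ t ≥ t₀, 0 < β t) (hεpos : ∀ t ≥ t₀, 0 < ε t)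
    (hα : ∀ t ≥ t₀, (1 + θ) / (θ * t) ≤ α t)
    (hβ' : ∀ t ≥ t₀, deriv β t / β t ≤ (1 - 2 * θ) / (θ * t))
    (hαε : ∀ t ≥ t₀, α t + t * deriv α t ≤ t * β t * ε t)
    (hεanti : AntitoneOn ε (Set.Ici t₀))
    (hεint : IntegrableOn (fun t => t * β t * ε t) (Set.Ioi t₀))
    (hβtop : Tendsto (fun t => t ^ 2 * β t) atTop atTop)
    (hΩ : ∃ p : EuclideanSpace ℝ (Fin n) × EuclideanSpace ℝ (Fin m),
      IsSaddle f g K p.1 p.2)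
    (x : ℝ → EuclideanSpace ℝ (Fin n)) (y : ℝ → EuclideanSpace ℝ (Fin m))
    (hsol : IsSol t₀ θ f g K α β ε x y)
    : ∃ M : ℝ, ∀ t ≥ t₀, ‖x t‖ ≤ M ∧ ‖y t‖ ≤ M := by
  obtain ⟨⟨xs, ys⟩, hsaddle⟩ := hΩ
  obtain ⟨hx2, hy2, hode⟩ := hsol
  obtain ⟨hxd, hxdd, hx'c⟩ := c2_facts hx2
  obtain ⟨hyd, hydd, hy'c⟩ := c2_facts hy2
  have hαd := c1_facts hαC1
  have hβd := c1_facts hβC1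
  have hεd := c1_facts hεC1
  set t₁ : ℝ := t₀ + 1 with ht₁def
  have ht₀₁ : t₀ < t₁ := by linarith
  have ht₁pos : 0 < t₁ := by linarith
  have hsub₁ : Set.Ici t₁ ⊆ Set.Ioi t₀ := fun z hz => lt_of_lt_of_le ht₀₁ hz
  -- nonpositivity of deriv ε
  have hεd' : ∀ s ∈ Set.Ioi t₀, deriv ε s ≤ 0 := by
    intro s hs
    have h1 := hεd s hs
    rw [hasDerivAt_iff_tendsto_slope] at h1
    have h2 : Tendsto (slope ε s) (𝓝[>] s) (𝓝 (deriv ε s)) :=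
      h1.mono_left (nhdsWithin_mono _ fun z hz => ne_of_gt hz)
    refine le_of_tendsto h2 ?_
    filter_upwards [self_mem_nhdsWithin] with z hz
    rw [slope_def_field]
    apply div_nonpos_of_nonpos_of_nonneg
    · have := hεanti (le_of_lt (Set.mem_Ioi.1 hs))
        (le_of_lt (lt_trans (Set.mem_Ioi.1 hs) hz)) (le_of_lt hz)
      linarith
    · rw [Set.mem_Ioi] at hz; linarith
  -- Lyapunov function and its derivative
  set R2 : ℝ := ⟪xs, xs⟫ + ⟪ys, ys⟫ with hR2def
  have hR2 : 0 ≤ R2 := add_nonneg real_inner_self_nonneg real_inner_self_nonneg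
  set c : ℝ := θ / 2 * R2 with hcdef
  have hc0 : 0 ≤ c := by positivity
  set Φ : ℝ → ℝ := fun s => s * β s * ε s with hΦdef
  set Fint : ℝ → ℝ := fun ρ => ∫ s in t₁..ρ, Φ s with hFintdef
  set En : ℝ → ℝ := fun r =>
      θ ^ 2 * r ^ 2 * β r *
        (f (x r) + ⟪K (x r), ys⟫ - g ys - (f xs + ⟪K xs, y r⟫ - g (y r))
          + ε r / 2 * (⟪x r, x r⟫ + ⟪y r, y r⟫))
      + (1/2 : ℝ) * ⟪x r - xs + (θ * r) • deriv x r, x r - xs + (θ * r) • deriv x r⟫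
      + (1/2 : ℝ) * ⟪y r - ys + (θ * r) • deriv y r, y r - ys + (θ * r) • deriv y r⟫
      + (θ * r * α r - (1 + θ)) / 2 * (⟪x r - xs, x r - xs⟫ + ⟪y r - ys, y r - ys⟫)
    with hEndef
  set Dfun : ℝ → ℝ := fun s =>
      θ ^ 2 * (2 * s * β s + s ^ 2 * deriv β s) *
        (f (x s) + ⟪K (x s), ys⟫ - g ys - (f xs + ⟪K xs, y s⟫ - g (y s))
          + ε s / 2 * (⟪x s, x s⟫ + ⟪y s, y s⟫))
      + θ ^ 2 * s ^ 2 * β s *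
        (⟪gradient f (x s), deriv x s⟫ + ⟪K (deriv x s), ys⟫ - ⟪K xs, deriv y s⟫
          + ⟪gradient g (y s), deriv y s⟫ + deriv ε s / 2 * (⟪x s, x s⟫ + ⟪y s, y s⟫)
          + ε s * (⟪x s, deriv x s⟫ + ⟪y s, deriv y s⟫))
      + ⟪(1 + θ) • deriv x s + (θ * s) • deriv (deriv x) s,
          x s - xs + (θ * s) • deriv x s⟫
      + ⟪(1 + θ) • deriv y s + (θ * s) • deriv (deriv y) s,
          y s - ys + (θ * s) • deriv y s⟫
      + (θ * α s + θ * s * deriv α s) / 2 * (⟪x s - xs, x s - xs⟫ + ⟪y s - ys, y s - ys⟫)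
      + (θ * s * α s - (1 + θ)) * (⟪deriv x s, x s - xs⟫ + ⟪deriv y s, y s - ys⟫)
    with hDfundef
  -- differentiability of En
  have hEd : ∀ s ∈ Set.Ioi t₀, HasDerivAt En (Dfun s) s := by
    intro s hs
    have hxs := hxd s hs
    have hys := hyd s hs
    have hxss := hxdd s hs
    have hyss := hydd s hs
    have hαs := hαd s hs
    have hβs := hβd s hs
    have hεs := hεd s hs
    have hfx : HasDerivAt (fun r => f (x r)) (⟪gradient f (x s), deriv x s⟫) s := by
      have h0 := (hf (x s)).hasFDerivAt.comp_hasDerivAt s hxs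
      have h1 : ⟪gradient f (x s), deriv x s⟫ = fderiv ℝ f (x s) (deriv x s) := by
        rw [gradient]; exact InnerProductSpace.toDual_symm_apply
      rw [h1]; exact h0
    have hgy : HasDerivAt (fun r => g (y r)) (⟪gradient g (y s), deriv y s⟫) s := by
      have h0 := (hg (y s)).hasFDerivAt.comp_hasDerivAt s hys
      have h1 : ⟪gradient g (y s), deriv y s⟫ = fderiv ℝ g (y s) (deriv y s) := by
        rw [gradient]; exact InnerProductSpace.toDual_symm_apply
      rw [h1]; exact h0
    have hKx : HasDerivAt (fun r => (⟪K (x r), ys⟫ : ℝ)) ⟪K (deriv x s), ys⟫ s := by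
      have h0 := HasDerivAt.inner ℝ (K.hasFDerivAt.comp_hasDerivAt s hxs) (hasDerivAt_const s ys)
      simpa using h0
    have hKy : HasDerivAt (fun r => (⟪K xs, y r⟫ : ℝ)) ⟪K xs, deriv y s⟫ s := by
      have h0 := HasDerivAt.inner ℝ (hasDerivAt_const s (K xs)) hys
      simpa using h0
    have hxx : HasDerivAt (fun r => (⟪x r, x r⟫ : ℝ)) (2 * ⟪x s, deriv x s⟫) s := by
      have h0 := HasDerivAt.inner ℝ hxs hxs
      have e : 2 * ⟪x s, deriv x s⟫ = ⟪x s, deriv x s⟫ + ⟪deriv x s, x s⟫ := by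
        rw [real_inner_comm (x s)]; ring
      rw [e]; exact h0
    have hyy : HasDerivAt (fun r => (⟪y r, y r⟫ : ℝ)) (2 * ⟪y s, deriv y s⟫) s := by
      have h0 := HasDerivAt.inner ℝ hys hys
      have e : 2 * ⟪y s, deriv y s⟫ = ⟪y s, deriv y s⟫ + ⟪deriv y s, y s⟫ := by
        rw [real_inner_comm (y s)]; ring
      rw [e]; exact h0
    have hpd : HasDerivAt (fun r => x r - xs + (θ * r) • deriv x r)
        (deriv x s + ((θ * s) • deriv (deriv x) s + (θ * 1) • deriv x s)) s :=
      (hxs.sub_const xs).add (((hasDerivAt_id s).const_mul θ).smul hxss)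
    have hqd : HasDerivAt (fun r => y r - ys + (θ * r) • deriv y r)
        (deriv y s + ((θ * s) • deriv (deriv y) s + (θ * 1) • deriv y s)) s :=
      (hys.sub_const ys).add (((hasDerivAt_id s).const_mul θ).smul hyss)
    have hud : HasDerivAt (fun r => x r - xs) (deriv x s) s := hxs.sub_const xs
    have hvd : HasDerivAt (fun r => y r - ys) (deriv y s) s := hys.sub_const ys
    have hcoef : HasDerivAt (fun r => θ ^ 2 * r ^ 2 * β r)
        (θ ^ 2 * (2 * s ^ 1) * β s + θ ^ 2 * s ^ 2 * deriv β s) s :=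
      ((hasDerivAt_pow 2 s).const_mul (θ ^ 2)).mul hβs
    have hM : HasDerivAt (fun r =>
        f (x r) + ⟪K (x r), ys⟫ - g ys - (f xs + ⟪K xs, y r⟫ - g (y r))
          + ε r / 2 * (⟪x r, x r⟫ + ⟪y r, y r⟫))
        ((⟪gradient f (x s), deriv x s⟫ + ⟪K (deriv x s), ys⟫
            - (0 + ⟪K xs, deriv y s⟫ - ⟪gradient g (y s), deriv y s⟫))
          + ((deriv ε s / 2) * (⟪x s, x s⟫ + ⟪y s, y s⟫)
            + (ε s / 2) * (2 * ⟪x s, deriv x s⟫ + 2 * ⟪y s, deriv y s⟫))) s :=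
      (((hfx.add hKx).sub_const (g ys)).sub
        (((hasDerivAt_const s (f xs)).add hKy).sub hgy)).add
        ((hεs.div_const 2).mul (hxx.add hyy))
    have hσd : HasDerivAt (fun r => (θ * r * α r - (1 + θ)) / 2)
        (((θ * 1) * α s + (θ * s) * deriv α s) / 2) s :=
      ((((hasDerivAt_id s).const_mul θ).mul hαs).sub_const (1 + θ)).div_const 2
    have huu : HasDerivAt (fun r => (⟪x r - xs, x r - xs⟫ : ℝ) + ⟪y r - ys, y r - ys⟫)
        ((⟪x s - xs, deriv x s⟫ + ⟪deriv x s, x s - xs⟫)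
          + (⟪y s - ys, deriv y s⟫ + ⟪deriv y s, y s - ys⟫)) s :=
      (HasDerivAt.inner ℝ hud hud).add (HasDerivAt.inner ℝ hvd hvd)
    have htot := (((hcoef.mul hM).add ((HasDerivAt.inner ℝ hpd hpd).const_mul (1/2 : ℝ))).add
        ((HasDerivAt.inner ℝ hqd hqd).const_mul (1/2 : ℝ))).add (hσd.mul huu)
    rw [hEndef, hDfundef]
    refine htot.congr_deriv ?_
    simp only [inner_add_left, inner_add_right, inner_sub_left, inner_sub_right,
      real_inner_smul_left, real_inner_smul_right, inner_zero_left, inner_zero_right,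
      real_inner_comm]
    ring
  -- pointwise derivative bound on (t₁, ∞) (indeed on (t₀, ∞))
  have hDle : ∀ s ∈ Set.Ioi t₀, Dfun s ≤ c * Φ s := by
    intro s hs
    have hst : t₀ ≤ s := le_of_lt hs
    have hspos : 0 < s := lt_trans ht₀ hs
    have hθs : 0 < θ * s := by positivity
    obtain ⟨hode1, hode2⟩ := hode s hst
    have hfi : f (x s) - f xs ≤ ⟪gradient f (x s), x s - xs⟫ := by
      have h0 := grad_ineq hf hfconv (x s) xs
      have h1 : ⟪gradient f (x s), xs - x s⟫ = -⟪gradient f (x s), x s - xs⟫ := by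
        rw [← inner_neg_right, neg_sub]
      linarith [h0, h1.le, h1.ge]
    have hgi : g (y s) - g ys ≤ ⟪gradient g (y s), y s - ys⟫ := by
      have h0 := grad_ineq hg hgconv (y s) ys
      have h1 : ⟪gradient g (y s), ys - y s⟫ = -⟪gradient g (y s), y s - ys⟫ := by
        rw [← inner_neg_right, neg_sub]
      linarith [h0, h1.le, h1.ge]
    have hsad : 0 ≤ (f (x s) + ⟪K (x s), ys⟫ - g ys) - (f xs + ⟪K xs, y s⟫ - g (y s)) := by
      have h1 := (hsaddle (x s) (y s)).1
      have h2 := (hsaddle (x s) (y s)).2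
      simp only [Lag] at h1 h2
      linarith
    have hσpos : 0 ≤ θ * s * α s - (1 + θ) := by
      have h1 := hα s hst
      rw [div_le_iff₀ hθs] at h1
      nlinarith
    have hσ' : θ * (α s + s * deriv α s) ≤ θ * s * β s * ε s := by
      have h1 := hαε s hst
      nlinarith
    have hββ : θ ^ 2 * (2 * s * β s + s ^ 2 * deriv β s) ≤ θ * s * β s := by
      have h1 := hβ' s hst
      rw [div_le_div_iff₀ (hβpos s hst) hθs] at h1
      nlinarith [mul_le_mul_of_nonneg_left h1 (le_of_lt hθs)]
    have hkey := key_ineq K xs (x s) (deriv x s) (deriv (deriv x) s) (gradient f (x s))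
      ys (y s) (deriv y s) (deriv (deriv y) s) (gradient g (y s))
      θ s (α s) (β s) (ε s) (deriv α s) (deriv β s) (deriv ε s)
      (f (x s)) (f xs) (g (y s)) (g ys)
      hode1 hode2 hfi hgi hsad hspos hθ (hβpos s hst) (hεpos s hst) (hεd' s hs)
      hσpos hσ' hββ
    rw [hDfundef, hcdef, hΦdef, hR2def]
    calc _ ≤ θ / 2 * (s * β s * ε s) * (⟪xs, xs⟫ + ⟪ys, ys⟫) := hkey
      _ = θ / 2 * (⟪xs, xs⟫ + ⟪ys, ys⟫) * (s * β s * ε s) := by ring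
  -- continuity of Φ and derivative of Fint
  have hΦc : ContinuousOn Φ (Set.Ioi t₀) := by
    rw [hΦdef]
    exact (continuousOn_id.mul (hβC1.continuousOn.mono Set.Ioi_subset_Ici_self)).mul
      (hεC1.continuousOn.mono Set.Ioi_subset_Ici_self)
  have hΦnonneg : ∀ z ∈ Set.Ioi t₀, 0 ≤ Φ z := by
    intro z hz
    have hz' : t₀ ≤ z := le_of_lt hz
    have : 0 < z := lt_trans ht₀ hz
    have := hβpos z hz'
    have := hεpos z hz'
    rw [hΦdef]
    positivity
  have hFd : ∀ s ∈ Set.Ioi t₀, HasDerivAt Fint (Φ s) s := by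
    intro s hs
    have hnh : Set.Ioi t₀ ∈ 𝓝 s := mem_nhds_iff.2 ⟨Set.Ioi t₀, subset_rfl, isOpen_Ioi, hs⟩
    have hint : IntervalIntegrable Φ volume t₁ s := by
      rw [intervalIntegrable_iff]
      apply hεint.mono_set
      intro z hz
      rcases Set.mem_uIoc.1 hz with h | h
      · exact Set.mem_Ioi.2 (lt_trans ht₀₁ h.1)
      · exact Set.mem_Ioi.2 (lt_trans hs h.1)
    exact intervalIntegral.integral_hasDerivAt_right hint
      (hΦc.stronglyMeasurableAtFilter isOpen_Ioi s hs) (hΦc.continuousAt hnh)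
  -- G is antitone on [t₁, ∞)
  have hGanti : AntitoneOn (fun r => En r - c * Fint r) (Set.Ici t₁) := by
    apply antitoneOn_of_deriv_nonpos (convex_Ici t₁)
    · -- continuity
      apply ContinuousOn.sub
      · intro z hz
        exact ((hEd z (hsub₁ hz)).continuousAt).continuousWithinAt
      · exact continuousOn_const.mul
          (fun z hz => ((hFd z (hsub₁ hz)).continuousAt).continuousWithinAt)
    · rw [interior_Ici]
      intro z hz
      have hz' : z ∈ Set.Ioi t₀ := lt_trans ht₀₁ hz
      exact ((hEd z hz').sub ((hFd z hz').const_mul c)).differentiableAt.differentiableWithinAt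
    · rw [interior_Ici]
      intro z hz
      have hz' : z ∈ Set.Ioi t₀ := lt_trans ht₀₁ hz
      have hder := (hEd z hz').sub ((hFd z hz').const_mul c)
      rw [HasDerivAt.deriv (f := fun r => En r - c * Fint r) hder]
      have := hDle z hz'
      linarith
  -- energy bound: En is bounded by C0 on [t₁, ∞)
  set I : ℝ := ∫ s in Set.Ioi t₀, Φ s with hIdef
  have hFle : ∀ t ∈ Set.Ici t₁, Fint t ≤ I := by
    intro t ht
    rw [hFintdef]
    simp only
    rw [intervalIntegral.integral_of_le ht, hIdef]
    apply setIntegral_mono_set hεint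
    · filter_upwards [MeasureTheory.ae_restrict_mem measurableSet_Ioi] with z hz
      exact hΦnonneg z hz
    · apply MeasureTheory.ae_of_all
      intro z hz
      exact Set.mem_Ioi.2 (lt_trans ht₀₁ hz.1)
  have hEnbdd : ∀ t ∈ Set.Ici t₁, En t ≤ En t₁ + c * I := by
    intro t ht
    have h1 := hGanti Set.self_mem_Ici ht ht
    have h2 : Fint t₁ = 0 := intervalIntegral.integral_same
    have h3 := hFle t ht
    have h4 : c * Fint t ≤ c * I := mul_le_mul_of_nonneg_left h3 hc0
    simp only [h2, mul_zero] at h1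
    linarith
  clear_value En
  set C0 : ℝ := En t₁ + c * I with hC0def
  -- lower bound on En: each piece nonneg except 1/2 p,q terms
  have hEnge : ∀ t ∈ Set.Ici t₁,
      (1/2 : ℝ) * ⟪x t - xs + (θ * t) • deriv x t, x t - xs + (θ * t) • deriv x t⟫ ≤ En t ∧
      (1/2 : ℝ) * ⟪y t - ys + (θ * t) • deriv y t, y t - ys + (θ * t) • deriv y t⟫ ≤ En t := by
    intro t ht
    have ht' : t₀ ≤ t := le_of_lt (hsub₁ ht)
    have htpos : 0 < t := lt_of_lt_of_le ht₁pos ht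
    have hθt : 0 < θ * t := by positivity
    have hsad : 0 ≤ (f (x t) + ⟪K (x t), ys⟫ - g ys) - (f xs + ⟪K xs, y t⟫ - g (y t)) := by
      have h1 := (hsaddle (x t) (y t)).1
      have h2 := (hsaddle (x t) (y t)).2
      simp only [Lag] at h1 h2
      linarith
    have hM₀ : 0 ≤ f (x t) + ⟪K (x t), ys⟫ - g ys - (f xs + ⟪K xs, y t⟫ - g (y t))
        + ε t / 2 * (⟪x t, x t⟫ + ⟪y t, y t⟫) := by
      have h1 : 0 ≤ ε t / 2 * (⟪x t, x t⟫ + ⟪y t, y t⟫) :=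
        mul_nonneg (by linarith [hεpos t ht'])
          (add_nonneg real_inner_self_nonneg real_inner_self_nonneg)
      linarith
    have hcoef : 0 ≤ θ ^ 2 * t ^ 2 * β t := by
      have := hβpos t ht'
      positivity
    have hσpos : 0 ≤ θ * t * α t - (1 + θ) := by
      have h1 := hα t ht'
      rw [div_le_iff₀ hθt] at h1
      nlinarith
    have h1 : 0 ≤ θ ^ 2 * t ^ 2 * β t * (f (x t) + ⟪K (x t), ys⟫ - g ys
        - (f xs + ⟪K xs, y t⟫ - g (y t)) + ε t / 2 * (⟪x t, x t⟫ + ⟪y t, y t⟫)) :=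
      mul_nonneg hcoef hM₀
    have h2 : 0 ≤ (θ * t * α t - (1 + θ)) / 2 * (⟪x t - xs, x t - xs⟫ + ⟪y t - ys, y t - ys⟫) :=
      mul_nonneg (by linarith) (add_nonneg real_inner_self_nonneg real_inner_self_nonneg)
    have h3 : 0 ≤ (1/2 : ℝ) * ⟪x t - xs + (θ * t) • deriv x t, x t - xs + (θ * t) • deriv x t⟫ :=
      mul_nonneg (by norm_num) real_inner_self_nonneg
    have h4 : 0 ≤ (1/2 : ℝ) * ⟪y t - ys + (θ * t) • deriv y t, y t - ys + (θ * t) • deriv y t⟫ :=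
      mul_nonneg (by norm_num) real_inner_self_nonneg
    rw [hEndef]
    constructor
    · simp only; linarith
    · simp only; linarith
  -- norm bounds on p and q
  set Cp : ℝ := Real.sqrt (2 * C0) with hCpdef
  have hpbd : ∀ t ∈ Set.Ici t₁, ‖x t - xs + (θ * t) • deriv x t‖ ≤ Cp := by
    intro t ht
    have h1 := (hEnge t ht).1
    have h2 := hEnbdd t ht
    have h3 : ⟪x t - xs + (θ * t) • deriv x t, x t - xs + (θ * t) • deriv x t⟫ ≤ 2 * C0 := by
      have h15 : ⟪x t - xs + (θ * t) • deriv x t, x t - xs + (θ * t) • deriv x t⟫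
          ≤ 2 * En t := by linarith
      have h16 : (2:ℝ) * En t ≤ 2 * (En t₁ + c * I) := by linarith
      rw [hC0def]; linarith [h15, h16]
    rw [real_inner_self_eq_norm_sq] at h3
    have h4 := Real.sqrt_le_sqrt h3
    rw [Real.sqrt_sq (norm_nonneg _)] at h4
    rwa [hCpdef]
  have hqbd : ∀ t ∈ Set.Ici t₁, ‖y t - ys + (θ * t) • deriv y t‖ ≤ Cp := by
    intro t ht
    have h1 := (hEnge t ht).2
    have h2 := hEnbdd t ht
    have h3 : ⟪y t - ys + (θ * t) • deriv y t, y t - ys + (θ * t) • deriv y t⟫ ≤ 2 * C0 := by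
      have h15 : ⟪y t - ys + (θ * t) • deriv y t, y t - ys + (θ * t) • deriv y t⟫
          ≤ 2 * En t := by linarith
      have h16 : (2:ℝ) * En t ≤ 2 * (En t₁ + c * I) := by linarith
      rw [hC0def]; linarith [h15, h16]
    rw [real_inner_self_eq_norm_sq] at h3
    have h4 := Real.sqrt_le_sqrt h3
    rw [Real.sqrt_sq (norm_nonneg _)] at h4
    rwa [hCpdef]
  -- apply bound_from_p
  have hxbd : ∀ t ∈ Set.Ici t₁, ‖x t - xs‖ ≤ ‖x t₁ - xs‖ + Cp := by
    apply bound_from_p θ t₁ hθ ht₁pos (fun r => x r - xs) (deriv x)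
    · intro s hs
      exact (hxd s (hsub₁ hs)).sub_const xs
    · exact hx'c.mono hsub₁
    · exact hpbd
  have hybd : ∀ t ∈ Set.Ici t₁, ‖y t - ys‖ ≤ ‖y t₁ - ys‖ + Cp := by
    apply bound_from_p θ t₁ hθ ht₁pos (fun r => y r - ys) (deriv y)
    · intro s hs
      exact (hyd s (hsub₁ hs)).sub_const ys
    · exact hy'c.mono hsub₁
    · exact hqbd
  -- compact part
  obtain ⟨Mx, hMx⟩ := (isCompact_Icc (a := t₀) (b := t₁)).exists_bound_of_continuousOn
    (hx2.continuousOn.mono Set.Icc_subset_Ici_self)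
  obtain ⟨My, hMy⟩ := (isCompact_Icc (a := t₀) (b := t₁)).exists_bound_of_continuousOn
    (hy2.continuousOn.mono Set.Icc_subset_Ici_self)
  refine ⟨max (max Mx My) (max (‖xs‖ + (‖x t₁ - xs‖ + Cp)) (‖ys‖ + (‖y t₁ - ys‖ + Cp))), ?_⟩
  intro t ht
  by_cases htc : t ≤ t₁
  · constructor
    · exact le_trans (hMx t ⟨ht, htc⟩) (le_trans (le_max_left _ _) (le_max_left _ _))
    · exact le_trans (hMy t ⟨ht, htc⟩) (le_trans (le_max_right _ _) (le_max_left _ _))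
  · push_neg at htc
    have ht1 : t ∈ Set.Ici t₁ := le_of_lt htc
    constructor
    · have h1 := hxbd t ht1
      have h2 : ‖x t‖ ≤ ‖x t - xs‖ + ‖xs‖ := by
        have := norm_add_le (x t - xs) xs
        simpa [sub_add_cancel] using this
      have : ‖x t‖ ≤ ‖xs‖ + (‖x t₁ - xs‖ + Cp) := by linarith
      exact le_trans this (le_trans (le_max_left _ _) (le_max_right _ _))
    · have h1 := hybd t ht1
      have h2 : ‖y t‖ ≤ ‖y t - ys‖ + ‖ys‖ := by
        have := norm_add_le (y t - ys) ys
        simpa [sub_add_cancel] using this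
      have : ‖y t‖ ≤ ‖ys‖ + (‖y t₁ - ys‖ + Cp) := by linarith
      exact le_trans this (le_trans (le_max_right _ _) (le_max_right _ _))
end
end

section
/- Assume f : ℝⁿ → ℝ and g : ℝᵐ → ℝ are differentiable convex functions, α, β, ε : [t₀, ∞) → (0, ∞) are C¹, θ > 0 and t₀ > 0 are constants, K : ℝⁿ → ℝᵐ is linear with adjoint K*, α(t) ≥ (1 + θ)/(θ t), β′(t)/β(t) ≤ (1 − 2θ)/(θ t), and α(t) + tα′(t) ≤ tβ(t)ε(t) for all t ≥ t₀, ε is nonincreasing with ∫_{t₀}^∞ tβ(t)ε(t) dt < ∞, and lim_{t→∞} t²β(t) = +∞. Then for every twice continuously differentiable global solution (x(t), y(t)) of the dynamical system (15) and every saddle point (x*, y*) of L, there exists a constant C > 0 such that L(x(t), y*) − L(x*, y(t)) ≤ C/(t²β(t)) for all t ≥ t₀. -/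
open scoped RealInnerProductSpace
open MeasureTheory Filter Asymptotics
open Topology

noncomputable section

section AuxLemmas

variable {E : Type*} [NormedAddCommGroup E] [InnerProductSpace ℝ E] [CompleteSpace E]

lemma convex_grad_ineq (f : E → ℝ) (hf : Differentiable ℝ f) (hc : ConvexOn ℝ Set.univ f)
    (a b : E) : f a - f b ≤ ⟪gradient f a, a - b⟫ := by
  have hline : ∀ s : ℝ, (AffineMap.lineMap a b : ℝ →ᵃ[ℝ] E) s = a + s • (b - a) := by
    intro s; simp [AffineMap.lineMap_apply]; module
  have hφc : ConvexOn ℝ Set.univ (f ∘ (AffineMap.lineMap a b : ℝ →ᵃ[ℝ] E)) := by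
    have := hc.comp_affineMap (AffineMap.lineMap a b : ℝ →ᵃ[ℝ] E)
    simpa using this
  have hcurve : HasDerivAt (fun s : ℝ => (AffineMap.lineMap a b : ℝ →ᵃ[ℝ] E) s) (b - a) 0 := by
    simp only [hline]
    simpa using ((hasDerivAt_id (0:ℝ)).smul_const (b - a)).const_add a
  have h0 : (AffineMap.lineMap a b : ℝ →ᵃ[ℝ] E) 0 = a := by rw [hline]; simp
  have hgrad : HasFDerivAt f (InnerProductSpace.toDual ℝ E (gradient f a))
      ((AffineMap.lineMap a b : ℝ →ᵃ[ℝ] E) 0) := by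
    rw [h0]; exact (hf a).hasGradientAt.hasFDerivAt
  have hφd : HasDerivAt (f ∘ (AffineMap.lineMap a b : ℝ →ᵃ[ℝ] E))
      ⟪gradient f a, b - a⟫ 0 := by
    have := hgrad.comp_hasDerivAt (x := (0:ℝ)) hcurve
    simpa [InnerProductSpace.toDual_apply_apply] using this
  have hslope := hφc.le_slope_of_hasDerivAt (Set.mem_univ 0) (Set.mem_univ 1)
    (by norm_num) hφd
  have h1 : (f ∘ (AffineMap.lineMap a b : ℝ →ᵃ[ℝ] E)) 1 = f b := by
    simp [Function.comp, hline]
  have h0' : (f ∘ (AffineMap.lineMap a b : ℝ →ᵃ[ℝ] E)) 0 = f a := by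
    simp [Function.comp, h0]
  rw [slope_def_field, h0', h1] at hslope
  have hle : ⟪gradient f a, b - a⟫ ≤ f b - f a := by simpa using hslope
  have hswap : ⟪gradient f a, a - b⟫ = - ⟪gradient f a, b - a⟫ := by
    rw [← inner_neg_right]; congr 1; abel
  linarith

lemma antitoneOn_deriv_nonpos {ε : ℝ → ℝ} {t₀ t : ℝ} (hε : AntitoneOn ε (Set.Ici t₀))
    (ht : t₀ < t) (hd : DifferentiableAt ℝ ε t) : deriv ε t ≤ 0 := by
  have hd' := hd.hasDerivAt
  rw [hasDerivAt_iff_tendsto_slope] at hd'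
  refine le_of_tendsto hd' ?_
  have hmem : Set.Ioi t₀ ∈ nhdsWithin t {t}ᶜ := nhdsWithin_le_nhds (isOpen_Ioi.mem_nhds ht)
  filter_upwards [hmem, self_mem_nhdsWithin] with s hs hsne
  rcases lt_or_gt_of_ne (show s ≠ t from hsne) with h | h
  · have : ε t ≤ ε s := hε (Set.mem_Ici.2 (le_of_lt hs)) (Set.mem_Ici.2 (le_of_lt ht)) h.le
    rw [slope_def_field]
    exact div_nonpos_of_nonneg_of_nonpos (by linarith) (by linarith)
  · have : ε s ≤ ε t := hε (Set.mem_Ici.2 (le_of_lt ht)) (Set.mem_Ici.2 (le_of_lt (lt_trans ht h))) h.le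
    rw [slope_def_field]
    exact div_nonpos_of_nonpos_of_nonneg (by linarith) (by linarith)

lemma hasDerivAt_comp_gradient {f : E → ℝ} (hf : Differentiable ℝ f) {c : ℝ → E} {c' : E}
    {t : ℝ} (hc : HasDerivAt c c' t) :
    HasDerivAt (fun s => f (c s)) ⟪gradient f (c t), c'⟫ t := by
  have := ((hf (c t)).hasGradientAt.hasFDerivAt).comp_hasDerivAt t hc
  exact this.congr_deriv (by simp [InnerProductSpace.toDual_apply_apply])

end AuxLemmas


set_option maxHeartbeats 3000000 in
/-- Theorem 3.1, rate of the primal-dual gap: under the fast-decay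
condition `∫ tβ(t)ε(t) dt < ∞`, the primal-dual gap along any solution of (15) is
`O(1/(t²β(t)))`. -/
theorem stmt_9 {n m : ℕ} (t₀ θ : ℝ) (ht₀ : 0 < t₀) (hθ : 0 < θ)
    (f : EuclideanSpace ℝ (Fin n) → ℝ) (g : EuclideanSpace ℝ (Fin m) → ℝ)
    (hf : Differentiable ℝ f) (hg : Differentiable ℝ g)
    (hfconv : ConvexOn ℝ Set.univ f) (hgconv : ConvexOn ℝ Set.univ g)
    (K : EuclideanSpace ℝ (Fin n) →L[ℝ] EuclideanSpace ℝ (Fin m))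
    (α β ε : ℝ → ℝ)
    (hαC1 : ContDiffOn ℝ 1 α (Set.Ici t₀)) (hβC1 : ContDiffOn ℝ 1 β (Set.Ici t₀))
    (hεC1 : ContDiffOn ℝ 1 ε (Set.Ici t₀))
    (hαpos : ∀ t ≥ t₀, 0 < α t) (hβpos : ∀ t ≥ t₀, 0 < β t) (hεpos : ∀ t ≥ t₀, 0 < ε t)
    (hα : ∀ t ≥ t₀, (1 + θ) / (θ * t) ≤ α t)
    (hβ' : ∀ t ≥ t₀, deriv β t / β t ≤ (1 - 2 * θ) / (θ * t))
    (hαε : ∀ t ≥ t₀, α t + t * deriv α t ≤ t * β t * ε t)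
    (hεanti : AntitoneOn ε (Set.Ici t₀))
    (hεint : IntegrableOn (fun t => t * β t * ε t) (Set.Ioi t₀))
    (hβtop : Tendsto (fun t => t ^ 2 * β t) atTop atTop)
    (hΩ : ∃ p : EuclideanSpace ℝ (Fin n) × EuclideanSpace ℝ (Fin m),
      IsSaddle f g K p.1 p.2)
    (x : ℝ → EuclideanSpace ℝ (Fin n)) (y : ℝ → EuclideanSpace ℝ (Fin m))
    (hsol : IsSol t₀ θ f g K α β ε x y)
    (xs : EuclideanSpace ℝ (Fin n)) (ys : EuclideanSpace ℝ (Fin m))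
    (hsaddle : IsSaddle f g K xs ys) :
    ∃ C > 0, ∀ t ≥ t₀,
      Lag f g K (x t) ys - Lag f g K xs (y t) ≤ C / (t ^ 2 * β t) := by
  classical
  obtain ⟨hx2, hy2, hode⟩ := hsol
  set X' : ℝ → EuclideanSpace ℝ (Fin n) := derivWithin x (Set.Ici t₀) with hX'def
  set Y' : ℝ → EuclideanSpace ℝ (Fin m) := derivWithin y (Set.Ici t₀) with hY'def
  set G : ℝ → ℝ := fun t => Lag f g K (x t) ys - Lag f g K xs (y t) with hGdef
  set S : ℝ → ℝ := fun t => ⟪x t, x t⟫ + ⟪y t, y t⟫ with hSdef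
  set M : ℝ → ℝ := fun t => G t + ε t / 2 * S t with hMdef
  set N : ℝ → ℝ := fun t => ⟪x t - xs, x t - xs⟫ + ⟪y t - ys, y t - ys⟫ with hNdef
  set c : ℝ → ℝ := fun t => θ * t * α t - (1 + θ) with hcdef
  set w1 : ℝ → EuclideanSpace ℝ (Fin n) := fun t => x t - xs + (θ * t) • X' t with hw1def
  set w2 : ℝ → EuclideanSpace ℝ (Fin m) := fun t => y t - ys + (θ * t) • Y' t with hw2def
  set En : ℝ → ℝ := fun t => θ^2 * t^2 * β t * M t
      + (1/2) * (⟪w1 t, w1 t⟫ + ⟪w2 t, w2 t⟫) + c t / 2 * N t with hEndef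
  set Sst : ℝ := ⟪xs, xs⟫ + ⟪ys, ys⟫ with hSstdef
  set hfun : ℝ → ℝ := fun t => θ * (t * β t * ε t) * (Sst / 2) with hhfundef
  set En' : ℝ → ℝ := fun t =>
      θ^2 * (2 * t * β t + t^2 * deriv β t) * M t
      + θ^2 * t^2 * β t *
        (⟪gradient f (x t), X' t⟫ + ⟪K (X' t), ys⟫ - ⟪K xs, Y' t⟫ + ⟪gradient g (y t), Y' t⟫
          + (deriv ε t / 2 * S t + ε t / 2 * (2 * ⟪x t, X' t⟫ + 2 * ⟪y t, Y' t⟫)))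
      + (1/2) * ((⟪w1 t, X' t + ((θ * t) • deriv (deriv x) t + θ • X' t)⟫
            + ⟪X' t + ((θ * t) • deriv (deriv x) t + θ • X' t), w1 t⟫)
          + (⟪w2 t, Y' t + ((θ * t) • deriv (deriv y) t + θ • Y' t)⟫
            + ⟪Y' t + ((θ * t) • deriv (deriv y) t + θ • Y' t), w2 t⟫))
      + ((θ * α t + θ * t * deriv α t) / 2 * N t
          + c t / 2 * (2 * ⟪x t - xs, X' t⟫ + 2 * ⟪y t - ys, Y' t⟫)) with hEn'def
  -- nonnegativity of the gap
  have hG0 : ∀ t, 0 ≤ G t := by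
    intro t
    have h1 := (hsaddle xs (y t)).1
    have h2 := (hsaddle (x t) ys).2
    simp only [hGdef]; linarith
  -- continuity of the energy
  have hEnc : ContinuousOn En (Set.Ici t₀) := by
    have hxc : ContinuousOn x (Set.Ici t₀) := hx2.continuousOn
    have hyc : ContinuousOn y (Set.Ici t₀) := hy2.continuousOn
    have hX'c : ContinuousOn X' (Set.Ici t₀) := by
      rw [hX'def]; exact hx2.continuousOn_derivWithin (uniqueDiffOn_Ici t₀) one_le_two
    have hY'c : ContinuousOn Y' (Set.Ici t₀) := by
      rw [hY'def]; exact hy2.continuousOn_derivWithin (uniqueDiffOn_Ici t₀) one_le_two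
    have hidc : ContinuousOn (fun s : ℝ => s) (Set.Ici t₀) := continuousOn_id
    have hGc : ContinuousOn G (Set.Ici t₀) := by
      rw [hGdef]
      simp only [Lag]
      exact (((hf.continuous.comp_continuousOn hxc).add
        (ContinuousOn.inner (K.continuous.comp_continuousOn hxc) continuousOn_const)).sub
          continuousOn_const).sub
        ((continuousOn_const.add (ContinuousOn.inner continuousOn_const hyc)).sub
          (hg.continuous.comp_continuousOn hyc))
    have hSc : ContinuousOn S (Set.Ici t₀) := by
      rw [hSdef]
      exact (ContinuousOn.inner hxc hxc).add (ContinuousOn.inner hyc hyc)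
    have hMc : ContinuousOn M (Set.Ici t₀) := by
      rw [hMdef]
      exact hGc.add (((hεC1.continuousOn).div_const 2).mul hSc)
    have hNc : ContinuousOn N (Set.Ici t₀) := by
      rw [hNdef]
      exact (ContinuousOn.inner (hxc.sub continuousOn_const) (hxc.sub continuousOn_const)).add
        (ContinuousOn.inner (hyc.sub continuousOn_const) (hyc.sub continuousOn_const))
    have hcc : ContinuousOn c (Set.Ici t₀) := by
      rw [hcdef]
      exact ((continuousOn_const.mul hidc).mul (hαC1.continuousOn)).sub continuousOn_const
    have hw1c : ContinuousOn w1 (Set.Ici t₀) := by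
      rw [hw1def]
      exact (hxc.sub continuousOn_const).add ((continuousOn_const.mul hidc).smul hX'c)
    have hw2c : ContinuousOn w2 (Set.Ici t₀) := by
      rw [hw2def]
      exact (hyc.sub continuousOn_const).add ((continuousOn_const.mul hidc).smul hY'c)
    rw [hEndef]
    exact (((continuousOn_const.mul (hidc.pow 2)).mul (hβC1.continuousOn)).mul hMc).add
      ((continuousOn_const.mul ((ContinuousOn.inner hw1c hw1c).add
        (ContinuousOn.inner hw2c hw2c)))) |>.add ((hcc.div_const 2).mul hNc)
  -- derivative of the energy at interior points
  have hEnd : ∀ t, t₀ < t → HasDerivAt En (En' t) t := by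
    intro t ht
    have htmem : Set.Ici t₀ ∈ 𝓝 t := Ici_mem_nhds ht
    have hxt : HasDerivAt x (X' t) t := by
      rw [hX'def, derivWithin_of_mem_nhds htmem]
      exact ((hx2.contDiffAt htmem).differentiableAt two_ne_zero).hasDerivAt
    have hyt : HasDerivAt y (Y' t) t := by
      rw [hY'def, derivWithin_of_mem_nhds htmem]
      exact ((hy2.contDiffAt htmem).differentiableAt two_ne_zero).hasDerivAt
    have hX2 : HasDerivAt X' (deriv (deriv x) t) t := by
      have hopen : ContDiffOn ℝ 1 (deriv x) (Set.Ioi t₀) :=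
        (hx2.mono Set.Ioi_subset_Ici_self).deriv_of_isOpen isOpen_Ioi (by norm_num)
      have hdd : DifferentiableAt ℝ (deriv x) t :=
        (hopen.contDiffAt (isOpen_Ioi.mem_nhds ht)).differentiableAt one_ne_zero
      refine hdd.hasDerivAt.congr_of_eventuallyEq ?_
      filter_upwards [isOpen_Ioi.mem_nhds ht] with s hs
      rw [hX'def]; exact derivWithin_of_mem_nhds (Ici_mem_nhds hs)
    have hY2 : HasDerivAt Y' (deriv (deriv y) t) t := by
      have hopen : ContDiffOn ℝ 1 (deriv y) (Set.Ioi t₀) :=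
        (hy2.mono Set.Ioi_subset_Ici_self).deriv_of_isOpen isOpen_Ioi (by norm_num)
      have hdd : DifferentiableAt ℝ (deriv y) t :=
        (hopen.contDiffAt (isOpen_Ioi.mem_nhds ht)).differentiableAt one_ne_zero
      refine hdd.hasDerivAt.congr_of_eventuallyEq ?_
      filter_upwards [isOpen_Ioi.mem_nhds ht] with s hs
      rw [hY'def]; exact derivWithin_of_mem_nhds (Ici_mem_nhds hs)
    have hαt : HasDerivAt α (deriv α t) t :=
      ((hαC1.contDiffAt htmem).differentiableAt one_ne_zero).hasDerivAt
    have hβt : HasDerivAt β (deriv β t) t :=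
      ((hβC1.contDiffAt htmem).differentiableAt one_ne_zero).hasDerivAt
    have hεt : HasDerivAt ε (deriv ε t) t :=
      ((hεC1.contDiffAt htmem).differentiableAt one_ne_zero).hasDerivAt
    have hfx : HasDerivAt (fun s => f (x s)) ⟪gradient f (x t), X' t⟫ t :=
      hasDerivAt_comp_gradient hf hxt
    have hgy : HasDerivAt (fun s => g (y s)) ⟪gradient g (y t), Y' t⟫ t :=
      hasDerivAt_comp_gradient hg hyt
    have hKx : HasDerivAt (fun s => ⟪K (x s), ys⟫) ⟪K (X' t), ys⟫ t := by
      have h1 : HasDerivAt (fun s => K (x s)) (K (X' t)) t :=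
        K.hasFDerivAt.comp_hasDerivAt t hxt
      simpa using HasDerivAt.inner ℝ h1 (hasDerivAt_const t ys)
    have hKy : HasDerivAt (fun s => ⟪K xs, y s⟫) ⟪K xs, Y' t⟫ t := by
      simpa using HasDerivAt.inner ℝ (hasDerivAt_const t (K xs)) hyt
    have hGd : HasDerivAt G (⟪gradient f (x t), X' t⟫ + ⟪K (X' t), ys⟫ - ⟪K xs, Y' t⟫
        + ⟪gradient g (y t), Y' t⟫) t := by
      rw [hGdef]
      simp only [Lag]
      have := ((hfx.add hKx).sub_const (g ys)).sub
        (((hasDerivAt_const t (f xs)).add hKy).sub hgy)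
      refine this.congr_deriv ?_
      ring
    have hSd : HasDerivAt S (2 * ⟪x t, X' t⟫ + 2 * ⟪y t, Y' t⟫) t := by
      rw [hSdef]
      have := (HasDerivAt.inner ℝ hxt hxt).add (HasDerivAt.inner ℝ hyt hyt)
      refine this.congr_deriv ?_
      rw [real_inner_comm (X' t) (x t), real_inner_comm (Y' t) (y t)]
      ring
    have hMd : HasDerivAt M (⟪gradient f (x t), X' t⟫ + ⟪K (X' t), ys⟫ - ⟪K xs, Y' t⟫
        + ⟪gradient g (y t), Y' t⟫
        + (deriv ε t / 2 * S t + ε t / 2 * (2 * ⟪x t, X' t⟫ + 2 * ⟪y t, Y' t⟫))) t := by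
      rw [hMdef]
      exact hGd.add ((hεt.div_const 2).mul hSd)
    have hq : HasDerivAt (fun s : ℝ => θ^2 * s^2 * β s)
        (θ^2 * (2 * t * β t + t^2 * deriv β t)) t := by
      have h1 : HasDerivAt (fun s : ℝ => θ^2 * s^2) (θ^2 * (2 * t)) t := by
        have := (hasDerivAt_pow 2 t).const_mul (θ^2)
        refine this.congr_deriv ?_
        push_cast
        ring
      have h2 := h1.mul hβt
      refine h2.congr_deriv ?_
      ring
    have hT1 : HasDerivAt (fun s => θ^2 * s^2 * β s * M s)
        (θ^2 * (2 * t * β t + t^2 * deriv β t) * M t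
          + θ^2 * t^2 * β t *
            (⟪gradient f (x t), X' t⟫ + ⟪K (X' t), ys⟫ - ⟪K xs, Y' t⟫
              + ⟪gradient g (y t), Y' t⟫
              + (deriv ε t / 2 * S t + ε t / 2 * (2 * ⟪x t, X' t⟫ + 2 * ⟪y t, Y' t⟫)))) t :=
      hq.mul hMd
    have hθs : HasDerivAt (fun s : ℝ => θ * s) θ t := by
      simpa using (hasDerivAt_id t).const_mul θ
    have hw1d : HasDerivAt w1 (X' t + ((θ * t) • deriv (deriv x) t + θ • X' t)) t := by
      rw [hw1def]
      exact (hxt.sub_const xs).add (hθs.smul hX2)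
    have hw2d : HasDerivAt w2 (Y' t + ((θ * t) • deriv (deriv y) t + θ • Y' t)) t := by
      rw [hw2def]
      exact (hyt.sub_const ys).add (hθs.smul hY2)
    have hT2 : HasDerivAt (fun s => (1/2) * (⟪w1 s, w1 s⟫ + ⟪w2 s, w2 s⟫))
        ((1/2) * ((⟪w1 t, X' t + ((θ * t) • deriv (deriv x) t + θ • X' t)⟫
            + ⟪X' t + ((θ * t) • deriv (deriv x) t + θ • X' t), w1 t⟫)
          + (⟪w2 t, Y' t + ((θ * t) • deriv (deriv y) t + θ • Y' t)⟫
            + ⟪Y' t + ((θ * t) • deriv (deriv y) t + θ • Y' t), w2 t⟫))) t :=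
      ((HasDerivAt.inner ℝ hw1d hw1d).add (HasDerivAt.inner ℝ hw2d hw2d)).const_mul (1/2)
    have hcd : HasDerivAt c (θ * α t + θ * t * deriv α t) t := by
      rw [hcdef]
      exact (hθs.mul hαt).sub_const (1 + θ)
    have hNd : HasDerivAt N (2 * ⟪x t - xs, X' t⟫ + 2 * ⟪y t - ys, Y' t⟫) t := by
      rw [hNdef]
      have := (HasDerivAt.inner ℝ (hxt.sub_const xs) (hxt.sub_const xs)).add
        (HasDerivAt.inner ℝ (hyt.sub_const ys) (hyt.sub_const ys))
      refine this.congr_deriv ?_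
      rw [real_inner_comm (X' t) (x t - xs), real_inner_comm (Y' t) (y t - ys)]
      ring
    have hT3 : HasDerivAt (fun s => c s / 2 * N s)
        ((θ * α t + θ * t * deriv α t) / 2 * N t
          + c t / 2 * (2 * ⟪x t - xs, X' t⟫ + 2 * ⟪y t - ys, Y' t⟫)) t :=
      (hcd.div_const 2).mul hNd
    rw [hEndef, hEn'def]
    exact (hT1.add hT2).add hT3
  -- the key differential inequality
  have hEnle : ∀ t, t₀ < t → En' t ≤ hfun t := by
    intro t ht
    have htmem : Set.Ici t₀ ∈ 𝓝 t := Ici_mem_nhds ht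
    have htpos : 0 < t := lt_trans ht₀ ht
    have hbpos : 0 < β t := hβpos t ht.le
    have hepos : 0 < ε t := hεpos t ht.le
    have hxe : deriv x t = X' t := by rw [hX'def, derivWithin_of_mem_nhds htmem]
    have hye : deriv y t = Y' t := by rw [hY'def, derivWithin_of_mem_nhds htmem]
    have hX2eq : deriv (deriv x) t = -(α t • X' t) - β t • (gradient f (x t) + ε t • x t
        + (ContinuousLinearMap.adjoint K) (y t + (θ * t) • Y' t)) := by
      have h := (hode t ht.le).1
      rw [hxe, hye] at h
      linear_combination (norm := module) h
    have hY2eq : deriv (deriv y) t = -(α t • Y' t) + β t • (K (x t + (θ * t) • X' t)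
        - gradient g (y t) - ε t • y t) := by
      have h := (hode t ht.le).2
      rw [hxe, hye] at h
      linear_combination (norm := module) h
    have hconvf : f (x t) - f xs ≤ ⟪gradient f (x t), x t - xs⟫ :=
      convex_grad_ineq f hf hfconv (x t) xs
    have hconvg : g (y t) - g ys ≤ ⟪gradient g (y t), y t - ys⟫ :=
      convex_grad_ineq g hg hgconv (y t) ys
    have hS0 : 0 ≤ S t := by
      rw [hSdef]
      exact add_nonneg real_inner_self_nonneg real_inner_self_nonneg
    have hN0 : 0 ≤ N t := by
      rw [hNdef]
      exact add_nonneg real_inner_self_nonneg real_inner_self_nonneg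
    have hM0 : 0 ≤ M t := by
      rw [hMdef]
      exact add_nonneg (hG0 t) (mul_nonneg (by positivity) hS0)
    have hXX0 : 0 ≤ ⟪X' t, X' t⟫ + ⟪Y' t, Y' t⟫ :=
      add_nonneg real_inner_self_nonneg real_inner_self_nonneg
    have hc0 : 0 ≤ θ * t * α t - (1 + θ) := by
      have h1 := hα t ht.le
      have h2 : 0 < θ * t := by positivity
      rw [div_le_iff₀ h2] at h1
      linarith [h1]
    have hb2 : θ * (2 * t * β t + t^2 * deriv β t) ≤ t * β t := by
      have h1 := hβ' t ht.le
      have h2 : 0 < θ * t := by positivity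
      rw [div_le_div_iff₀ hbpos h2] at h1
      linarith [mul_le_mul_of_nonneg_left h1 htpos.le]
    have hcp : α t + t * deriv α t ≤ t * β t * ε t := hαε t ht.le
    have hep : deriv ε t ≤ 0 :=
      antitoneOn_deriv_nonpos hεanti ht ((hεC1.contDiffAt htmem).differentiableAt one_ne_zero)
    have hkey : hfun t - En' t =
        θ * t * β t * (⟪gradient f (x t), x t - xs⟫ - (f (x t) - f xs))
        + θ * t * β t * (⟪gradient g (y t), y t - ys⟫ - (g (y t) - g ys))
        + θ * (t * β t - θ * (2 * t * β t + t^2 * deriv β t)) * M t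
        + (θ * t * α t - (1 + θ)) * (θ * t) * (⟪X' t, X' t⟫ + ⟪Y' t, Y' t⟫)
        + (t * β t * ε t - (α t + t * deriv α t)) * (θ / 2) * N t
        + (-(θ^2 * t^2 * β t) / 2) * deriv ε t * S t := by
      simp only [hEn'def, hhfundef, hMdef, hGdef, hNdef, hSdef, hSstdef, hw1def,
        hw2def, hcdef]
      rw [hX2eq, hY2eq]
      simp only [Lag, inner_add_left, inner_add_right, inner_sub_left, inner_sub_right,
        real_inner_smul_left, real_inner_smul_right, inner_neg_left, inner_neg_right,
        map_add, _root_.map_smul, map_sub, ContinuousLinearMap.adjoint_inner_right,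
        ContinuousLinearMap.adjoint_inner_left]
      simp only [real_inner_comm]
      ring
    have e1 : 0 ≤ θ * t * β t * (⟪gradient f (x t), x t - xs⟫ - (f (x t) - f xs)) :=
      mul_nonneg (by positivity) (by linarith)
    have e2 : 0 ≤ θ * t * β t * (⟪gradient g (y t), y t - ys⟫ - (g (y t) - g ys)) :=
      mul_nonneg (by positivity) (by linarith)
    have e3 : 0 ≤ θ * (t * β t - θ * (2 * t * β t + t^2 * deriv β t)) * M t :=
      mul_nonneg (mul_nonneg hθ.le (by linarith)) hM0
    have e4 : 0 ≤ (θ * t * α t - (1 + θ)) * (θ * t) * (⟪X' t, X' t⟫ + ⟪Y' t, Y' t⟫) :=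
      mul_nonneg (mul_nonneg hc0 (by positivity)) hXX0
    have e5 : 0 ≤ (t * β t * ε t - (α t + t * deriv α t)) * (θ / 2) * N t :=
      mul_nonneg (mul_nonneg (by linarith) (by positivity)) hN0
    have hA : 0 ≤ θ^2 * t^2 * β t := by positivity
    have h6a : 0 ≤ (-(θ^2 * t^2 * β t) / 2) * deriv ε t := by nlinarith [hA, hep]
    have e6 : 0 ≤ (-(θ^2 * t^2 * β t) / 2) * deriv ε t * S t := mul_nonneg h6a hS0
    rw [← sub_nonneg, hkey]
    exact add_nonneg (add_nonneg (add_nonneg (add_nonneg (add_nonneg e1 e2) e3) e4) e5) e6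
  -- integral bound
  have hfun_nonneg : ∀ s ∈ Set.Ioi t₀, 0 ≤ hfun s := by
    intro s hs
    have hs' : t₀ ≤ s := le_of_lt hs
    have h1 : 0 < s := lt_of_lt_of_le ht₀ hs'
    have h2 : 0 < β s := hβpos s hs'
    have h3 : 0 < ε s := hεpos s hs'
    have h4 : (0:ℝ) ≤ Sst := by
      rw [hSstdef]; exact add_nonneg real_inner_self_nonneg real_inner_self_nonneg
    rw [hhfundef]
    have : 0 ≤ s * β s * ε s := by positivity
    positivity
  have hIoi_int : IntegrableOn hfun (Set.Ioi t₀) := by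
    rw [hhfundef]
    exact (hεint.const_mul θ).mul_const (Sst / 2)
  have hftc : ∀ t, t₀ ≤ t → En t ≤ En t₀ + ∫ s in Set.Ioi t₀, hfun s := by
    intro t ht
    have hint : IntegrableOn hfun (Set.Icc t₀ t) := by
      rw [integrableOn_Icc_iff_integrableOn_Ioc]
      exact hIoi_int.mono_set Set.Ioc_subset_Ioi_self
    have h1 : En t - En t₀ ≤ ∫ s in t₀..t, hfun s := by
      apply intervalIntegral.sub_le_integral_of_hasDeriv_right_of_le ht
        (hEnc.mono (Set.Icc_subset_Ici_self)) (fun s hs => ((hEnd s hs.1).hasDerivWithinAt))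
        hint (fun s hs => hEnle s hs.1)
    have h2 : ∫ s in t₀..t, hfun s ≤ ∫ s in Set.Ioi t₀, hfun s := by
      rw [intervalIntegral.integral_of_le ht]
      apply MeasureTheory.setIntegral_mono_set hIoi_int
      · exact (MeasureTheory.ae_restrict_iff' measurableSet_Ioi).2 (.of_forall hfun_nonneg)
      · exact .of_forall Set.Ioc_subset_Ioi_self
    have h4 : En t ≤ (∫ s in t₀..t, hfun s) + En t₀ := sub_le_iff_le_add.mp h1
    have h3 := add_le_add_left h2 (En t₀)
    exact le_of_le_of_eq (h4.trans h3) (add_comm _ _)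
  -- nonnegativity facts valid on all of [t₀, ∞)
  have hS0' : ∀ t, 0 ≤ S t := by
    intro t; rw [hSdef]; exact add_nonneg real_inner_self_nonneg real_inner_self_nonneg
  have hN0' : ∀ t, 0 ≤ N t := by
    intro t; rw [hNdef]; exact add_nonneg real_inner_self_nonneg real_inner_self_nonneg
  have hM0' : ∀ t, t₀ ≤ t → 0 ≤ M t := by
    intro t ht
    rw [hMdef]
    have := hεpos t ht
    exact add_nonneg (hG0 t) (mul_nonneg (by positivity) (hS0' t))
  have hc0' : ∀ t, t₀ ≤ t → 0 ≤ c t := by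
    intro t ht
    have h1 := hα t ht
    have htpos : 0 < t := lt_of_lt_of_le ht₀ ht
    have h2 : 0 < θ * t := by positivity
    rw [div_le_iff₀ h2] at h1
    rw [hcdef]
    simp only []
    linarith [h1]
  have hEnlow : ∀ t, t₀ ≤ t → θ^2 * t^2 * β t * G t ≤ En t := by
    intro t ht
    have htpos : 0 < t := lt_of_lt_of_le ht₀ ht
    have hb := hβpos t ht
    have he := hεpos t ht
    have h1 : 0 ≤ (1/2) * (⟪w1 t, w1 t⟫ + ⟪w2 t, w2 t⟫) :=
      mul_nonneg (by norm_num) (add_nonneg real_inner_self_nonneg real_inner_self_nonneg)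
    have h2 : 0 ≤ c t / 2 * N t :=
      mul_nonneg (div_nonneg (hc0' t ht) (by norm_num)) (hN0' t)
    have h3 : θ^2 * t^2 * β t * G t ≤ θ^2 * t^2 * β t * M t := by
      apply mul_le_mul_of_nonneg_left _ (by positivity : (0:ℝ) ≤ θ^2 * t^2 * β t)
      rw [hMdef]
      simp only []
      exact le_add_of_nonneg_right (mul_nonneg (div_nonneg he.le (by norm_num)) (hS0' t))
    rw [hEndef]
    simp only []
    exact le_add_of_nonneg_right h2 |>.trans' (le_add_of_nonneg_right h1 |>.trans' h3)
  set C₀ : ℝ := En t₀ + ∫ s in Set.Ioi t₀, hfun s with hC₀def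
  have hC₀0 : 0 ≤ C₀ := by
    have h1 : 0 ≤ En t₀ := by
      have h0 := hEnlow t₀ le_rfl
      have hb0 := hβpos t₀ le_rfl
      have h2 : 0 ≤ θ^2 * t₀^2 * β t₀ * G t₀ :=
        mul_nonneg (by positivity) (hG0 t₀)
      exact h2.trans h0
    have h2 : 0 ≤ ∫ s in Set.Ioi t₀, hfun s :=
      MeasureTheory.setIntegral_nonneg measurableSet_Ioi hfun_nonneg
    rw [hC₀def]; exact add_nonneg h1 h2
  refine ⟨(C₀ + 1) / θ^2, by positivity, ?_⟩
  intro t ht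
  have htpos : 0 < t := lt_of_lt_of_le ht₀ ht
  have hb := hβpos t ht
  have hup : θ^2 * t^2 * β t * G t ≤ C₀ := le_trans (hEnlow t ht) (hftc t ht)
  rw [div_div, le_div_iff₀ (by positivity)]
  calc (Lag f g K (x t) ys - Lag f g K xs (y t)) * (θ^2 * (t^2 * β t)) = θ^2 * t^2 * β t * G t := by
        simp only [hGdef]; ring
    _ ≤ C₀ := hup
    _ ≤ C₀ + 1 := le_add_of_nonneg_right zero_le_one
end
end

section
/- Assume f : ℝⁿ → ℝ and g : ℝᵐ → ℝ are differentiable convex functions, α, β, ε : [t₀, ∞) → (0, ∞) are C¹, θ > 0 and t₀ > 0 are constants, K : ℝⁿ → ℝᵐ is linear with adjoint K*, α(t) ≥ (1 + θ)/(θ t), β′(t)/β(t) ≤ (1 − 2θ)/(θ t), α(t) + tα′(t) ≤ tβ(t)ε(t), and moreover θ t α(t) − θ − 1 > 0 for all t ≥ t₀, ε is nonincreasing with ∫_{t₀}^∞ tβ(t)ε(t) dt < ∞, and lim_{t→∞} t²β(t) = +∞. Then for every twice continuously differentiable global solution (x(t), y(t)) of the dynamical system (15), ∫_{t₀}^∞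 t(tα(t) − 1/θ − 1)(‖ẋ(t)‖² + ‖ẏ(t)‖²) dt < +∞. -/
open scoped RealInnerProductSpace
open MeasureTheory Filter Asymptotics

noncomputable section

open Topology


lemma grad_ineq' {d : ℕ} {F : EuclideanSpace ℝ (Fin d) → ℝ} (hF : Differentiable ℝ F)
    (hc : ConvexOn ℝ Set.univ F) (a b : EuclideanSpace ℝ (Fin d)) :
    F a + ⟪gradient F a, b - a⟫ ≤ F b := by
  set φ : ℝ → ℝ := fun s => F (a + s • (b - a)) with hφ
  have hline : HasDerivAt (fun s : ℝ => a + s • (b - a)) (b - a) 0 := by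
    simpa using (hasDerivAt_id (0:ℝ)).smul_const (b - a) |>.const_add a
  have hFd : HasFDerivAt F ((InnerProductSpace.toDual ℝ _) (gradient F a))
      ((fun s : ℝ => a + s • (b - a)) 0) := by
    simpa using (hF a).hasGradientAt.hasFDerivAt
  have hd : HasDerivAt φ ⟪gradient F a, b - a⟫ 0 := by
    have := hFd.comp_hasDerivAt 0 hline
    exact this
  have hφconv : ConvexOn ℝ Set.univ φ := by
    have := hc.comp_affineMap (AffineMap.lineMap a b : ℝ →ᵃ[ℝ] _)
    simp only [Set.preimage_univ] at this
    have heq : φ = F ∘ (AffineMap.lineMap a b : ℝ →ᵃ[ℝ] _) := by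
      funext s
      simp only [hφ, Function.comp_apply, AffineMap.coe_lineMap, vsub_eq_sub, vadd_eq_add]
      rw [add_comm]
    rw [heq]; exact this
  have hs := hφconv.le_slope_of_hasDerivAt (Set.mem_univ (0:ℝ)) (Set.mem_univ 1)
    one_pos hd
  rw [slope_def_field] at hs
  have h1 : φ 1 = F b := by simp [φ]
  have h0 : φ 0 = F a := by simp [φ]
  rw [h1, h0, show (1:ℝ) - 0 = 1 by norm_num, div_one] at hs
  linarith

lemma anti_deriv_nonpos' {t₀ : ℝ} {ε : ℝ → ℝ} (h : AntitoneOn ε (Set.Ici t₀)) {t e : ℝ}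
    (ht : t₀ < t) (hd : HasDerivAt ε e t) : e ≤ 0 := by
  have hT : Tendsto (slope ε t) (𝓝[>] t) (𝓝 e) :=
    (hasDerivAt_iff_tendsto_slope.1 hd).mono_left
      (nhdsWithin_mono _ (fun s hs => ne_of_gt hs))
  refine le_of_tendsto hT ?_
  filter_upwards [self_mem_nhdsWithin] with s hs
  have hε : ε s ≤ ε t := h (le_of_lt ht) (le_of_lt (ht.trans hs)) (le_of_lt hs)
  have hst : (0:ℝ) < s - t := sub_pos.2 hs
  rw [slope_def_field]
  exact div_nonpos_of_nonpos_of_nonneg (sub_nonpos.2 hε) hst.le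

lemma inner_half_identity {E : Type*} [NormedAddCommGroup E] [InnerProductSpace ℝ E]
    (v w : E) : ⟪v - w, v⟫ = (⟪v, v⟫ + ⟪v - w, v - w⟫ - ⟪w, w⟫) / 2 := by
  simp only [inner_sub_left, inner_sub_right]
  rw [real_inner_comm w v]; ring

lemma key_identity' {E F : Type*} [NormedAddCommGroup E] [InnerProductSpace ℝ E]
    [NormedAddCommGroup F] [InnerProductSpace ℝ F] [CompleteSpace E] [CompleteSpace F]
    (K : E →L[ℝ] F) (X Fx xs xv : E) (Y Gy ys yv : F) (θ t α β ε : ℝ) :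
    ⟪xv - xs + (θ*t) • X, X + (θ • X + (θ*t) • (-(α • X) - β • (Fx + ε • xv
        + (ContinuousLinearMap.adjoint K) (yv + (θ*t) • Y))))⟫
    + ⟪yv - ys + (θ*t) • Y, Y + (θ • Y + (θ*t) • (-(α • Y) + β • (K (xv + (θ*t) • X)
        - Gy - ε • yv)))⟫
    = (1 + θ - θ*t*α) * (⟪xv - xs, X⟫ + ⟪yv - ys, Y⟫)
      + θ*t*(1 + θ - θ*t*α) * (⟪X, X⟫ + ⟪Y, Y⟫)
      - θ*t*β * (⟪xv - xs, Fx⟫ + ⟪K xv - K xs, ys⟫ + (⟪yv - ys, Gy⟫ - ⟪K xs, yv - ys⟫)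
          + ε * (⟪xv - xs, xv⟫ + ⟪yv - ys, yv⟫))
      - θ^2*t^2*β * (⟪Fx, X⟫ + ⟪K X, ys⟫ + (⟪Gy, Y⟫ - ⟪K xs, Y⟫)
          + ε * (⟪xv, X⟫ + ⟪yv, Y⟫)) := by
  simp only [inner_add_left, inner_add_right, inner_sub_left, inner_sub_right,
    inner_smul_left, inner_smul_right, inner_neg_left, inner_neg_right, map_add, _root_.map_smul,
    ContinuousLinearMap.adjoint_inner_right, ContinuousLinearMap.coe_smul', Pi.smul_apply,
    RCLike.inner_apply, conj_trivial, smul_eq_mul, map_sub]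
  rw [real_inner_comm yv (K xv), real_inner_comm yv (K xs), real_inner_comm yv (K X),
    real_inner_comm ys (K xv), real_inner_comm ys (K xs), real_inner_comm ys (K X),
    real_inner_comm Y (K xv), real_inner_comm Y (K xs), real_inner_comm Y (K X),
    real_inner_comm Fx X, real_inner_comm Gy Y, real_inner_comm xv X, real_inner_comm yv Y]
  ring

-- regularity helpers
lemma c1_hasDerivAt {t₀ : ℝ} {h : ℝ → ℝ} (hh : ContDiffOn ℝ 1 h (Set.Ici t₀)) {t : ℝ}
    (ht : t₀ < t) : HasDerivAt h (deriv h t) t :=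
  ((hh.contDiffAt (Ici_mem_nhds ht)).differentiableAt one_ne_zero).hasDerivAt

lemma c2_hasDerivAt {t₀ : ℝ} {E : Type*} [NormedAddCommGroup E] [NormedSpace ℝ E]
    {x : ℝ → E} (hx : ContDiffOn ℝ 2 x (Set.Ici t₀)) {t : ℝ}
    (ht : t₀ < t) : HasDerivAt x (deriv x t) t :=
  ((hx.contDiffAt (Ici_mem_nhds ht)).differentiableAt (by norm_num)).hasDerivAt

lemma c2_deriv_hasDerivAt {t₀ : ℝ} {E : Type*} [NormedAddCommGroup E] [NormedSpace ℝ E]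
    {x : ℝ → E} (hx : ContDiffOn ℝ 2 x (Set.Ici t₀)) {t : ℝ}
    (ht : t₀ < t) : HasDerivAt (deriv x) (deriv (deriv x) t) t := by
  have h1 : ContDiffOn ℝ 1 (deriv x) (Set.Ioi t₀) :=
    (hx.mono Set.Ioi_subset_Ici_self).deriv_of_isOpen isOpen_Ioi (by norm_num)
  exact ((h1.contDiffAt (isOpen_Ioi.mem_nhds ht)).differentiableAt one_ne_zero).hasDerivAt

lemma c2_deriv_continuousOn {t₀ : ℝ} {E : Type*} [NormedAddCommGroup E] [NormedSpace ℝ E]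
    {x : ℝ → E} (hx : ContDiffOn ℝ 2 x (Set.Ici t₀)) :
    ContinuousOn (derivWithin x (Set.Ici t₀)) (Set.Ici t₀) :=
  hx.continuousOn_derivWithin (uniqueDiffOn_Ici t₀) (by norm_num)

lemma deriv_eq_derivWithin {t₀ : ℝ} {E : Type*} [NormedAddCommGroup E] [NormedSpace ℝ E]
    {x : ℝ → E} {t : ℝ} (ht : t₀ < t) : deriv x t = derivWithin x (Set.Ici t₀) t :=
  (derivWithin_of_mem_nhds (Ici_mem_nhds ht)).symm


set_option maxHeartbeats 3200000 in
/-- Theorem 3.1, velocity integral estimate: if moreover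
`θtα(t) − θ − 1 > 0` for all `t ≥ t₀`, then
`∫ t(tα(t) − 1/θ − 1)(‖ẋ‖² + ‖ẏ‖²) dt < ∞` along any solution of (15). -/
theorem stmt_12 {n m : ℕ} (t₀ θ : ℝ) (ht₀ : 0 < t₀) (hθ : 0 < θ)
    (f : EuclideanSpace ℝ (Fin n) → ℝ) (g : EuclideanSpace ℝ (Fin m) → ℝ)
    (hf : Differentiable ℝ f) (hg : Differentiable ℝ g)
    (hfconv : ConvexOn ℝ Set.univ f) (hgconv : ConvexOn ℝ Set.univ g)
    (K : EuclideanSpace ℝ (Fin n) →L[ℝ] EuclideanSpace ℝ (Fin m))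
    (α β ε : ℝ → ℝ)
    (hαC1 : ContDiffOn ℝ 1 α (Set.Ici t₀)) (hβC1 : ContDiffOn ℝ 1 β (Set.Ici t₀))
    (hεC1 : ContDiffOn ℝ 1 ε (Set.Ici t₀))
    (hαpos : ∀ t ≥ t₀, 0 < α t) (hβpos : ∀ t ≥ t₀, 0 < β t) (hεpos : ∀ t ≥ t₀, 0 < ε t)
    (hα : ∀ t ≥ t₀, (1 + θ) / (θ * t) ≤ α t)
    (hβ' : ∀ t ≥ t₀, deriv β t / β t ≤ (1 - 2 * θ) / (θ * t))
    (hαε : ∀ t ≥ t₀, α t + t * deriv α t ≤ t * β t * ε t)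
    (hεanti : AntitoneOn ε (Set.Ici t₀))
    (hεint : IntegrableOn (fun t => t * β t * ε t) (Set.Ioi t₀))
    (hβtop : Tendsto (fun t => t ^ 2 * β t) atTop atTop)
    (hΩ : ∃ p : EuclideanSpace ℝ (Fin n) × EuclideanSpace ℝ (Fin m),
      IsSaddle f g K p.1 p.2)
    (x : ℝ → EuclideanSpace ℝ (Fin n)) (y : ℝ → EuclideanSpace ℝ (Fin m))
    (hsol : IsSol t₀ θ f g K α β ε x y)
    (hθα : ∀ t ≥ t₀, 0 < θ * t * α t - θ - 1) :
    IntegrableOn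
      (fun t => t * (t * α t - 1 / θ - 1) * (‖deriv x t‖ ^ 2 + ‖deriv y t‖ ^ 2))
      (Set.Ioi t₀) := by
  classical
  obtain ⟨⟨xs, ys⟩, hsad⟩ := hΩ
  obtain ⟨hx2, hy2, heqn⟩ := hsol
  set S : ℝ := ⟪xs, xs⟫ + ⟪ys, ys⟫ with hS
  set C0 : ℝ := θ * S / 2 with hC0
  set Vx : ℝ → ℝ := fun t => f (x t) - f xs + ⟪K (x t) - K xs, ys⟫ with hVx
  set Vy : ℝ → ℝ := fun t => g (y t) - g ys - ⟪K xs, y t - ys⟫ with hVy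
  set Nf : ℝ → ℝ := fun t => ⟪x t, x t⟫ + ⟪y t, y t⟫ with hNf
  set Na : ℝ → ℝ := fun t => ⟪x t - xs, x t - xs⟫ + ⟪y t - ys, y t - ys⟫ with hNa
  set Q : ℝ → ℝ := fun t => Vx t + Vy t + ε t/2 * Nf t with hQ
  set E : ℝ → ℝ := fun t =>
      θ^2*t^2*β t * Q t
      + 1/2 * ⟪x t - xs + (θ*t) • deriv x t, x t - xs + (θ*t) • deriv x t⟫
      + 1/2 * ⟪y t - ys + (θ*t) • deriv y t, y t - ys + (θ*t) • deriv y t⟫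
      + (θ*t*α t - θ - 1)/2 * Na t with hE
  set Ed : ℝ → ℝ := fun t =>
      θ^2*(2*t*β t + t^2*deriv β t) * Q t
      + θ^2*t^2*β t * (⟪gradient f (x t), deriv x t⟫ + ⟪K (deriv x t), ys⟫
          + (⟪gradient g (y t), deriv y t⟫ - ⟪K xs, deriv y t⟫)
          + (deriv ε t/2 * Nf t + ε t * (⟪x t, deriv x t⟫ + ⟪y t, deriv y t⟫)))
      + ⟪x t - xs + (θ*t) • deriv x t,
          deriv x t + (θ • deriv x t + (θ*t) • deriv (deriv x) t)⟫
      + ⟪y t - ys + (θ*t) • deriv y t,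
          deriv y t + (θ • deriv y t + (θ*t) • deriv (deriv y) t)⟫
      + ((θ*α t + θ*t*deriv α t)/2 * Na t
          + (θ*t*α t - θ - 1) * (⟪x t - xs, deriv x t⟫ + ⟪y t - ys, deriv y t⟫)) with hEd
  clear_value S C0 Vx Vy Nf Na Q E Ed
  -- nonnegativity of the potential terms
  have hVx0 : ∀ t, 0 ≤ Vx t := by
    intro t
    have h := (hsad (x t) (y t)).2
    simp only [Lag] at h
    rw [hVx]; beta_reduce
    rw [inner_sub_left]
    linarith
  have hVy0 : ∀ t, 0 ≤ Vy t := by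
    intro t
    have h := (hsad (x t) (y t)).1
    simp only [Lag] at h
    rw [hVy]; beta_reduce
    rw [inner_sub_right]
    linarith
  have hNf0 : ∀ t, 0 ≤ Nf t := fun t => by
    rw [hNf]; beta_reduce; exact add_nonneg real_inner_self_nonneg real_inner_self_nonneg
  have hNa0 : ∀ t, 0 ≤ Na t := fun t => by
    rw [hNa]; beta_reduce; exact add_nonneg real_inner_self_nonneg real_inner_self_nonneg
  have hQ0 : ∀ t ≥ t₀, 0 ≤ Q t := by
    intro t ht
    have hε0 := (hεpos t ht).le
    rw [hQ]; beta_reduce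
    have h5 : 0 ≤ ε t/2 * Nf t := mul_nonneg (by linarith) (hNf0 t)
    have h6 := hVx0 t
    have h7 := hVy0 t
    exact add_nonneg (add_nonneg h6 h7) h5
  have hEnn : ∀ t ∈ Set.Ioi t₀, 0 ≤ E t := by
    intro t ht
    have ht0 : (0:ℝ) < t := lt_trans ht₀ ht
    have hc0 := (hθα t (le_of_lt ht))
    rw [hE]; beta_reduce
    have h1 : 0 ≤ θ^2*t^2*β t * Q t :=
      mul_nonneg (mul_nonneg (by positivity) (hβpos t (le_of_lt ht)).le) (hQ0 t (le_of_lt ht))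
    have h2 : (0:ℝ) ≤ 1/2 * ⟪x t - xs + (θ*t) • deriv x t, x t - xs + (θ*t) • deriv x t⟫ :=
      mul_nonneg (by norm_num) real_inner_self_nonneg
    have h3 : (0:ℝ) ≤ 1/2 * ⟪y t - ys + (θ*t) • deriv y t, y t - ys + (θ*t) • deriv y t⟫ :=
      mul_nonneg (by norm_num) real_inner_self_nonneg
    have h4 : 0 ≤ (θ*t*α t - θ - 1)/2 * Na t :=
      mul_nonneg (by linarith) (hNa0 t)
    linarith
  -- derivative of the energy
  have hder : ∀ t ∈ Set.Ioi t₀, HasDerivAt E (Ed t) t := by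
    intro t hti
    have hx1 := c2_hasDerivAt hx2 hti
    have hy1 := c2_hasDerivAt hy2 hti
    have hx1' := c2_deriv_hasDerivAt hx2 hti
    have hy1' := c2_deriv_hasDerivAt hy2 hti
    have hαd := c1_hasDerivAt hαC1 hti
    have hβd := c1_hasDerivAt hβC1 hti
    have hεd := c1_hasDerivAt hεC1 hti
    have hfx : HasDerivAt (fun s => f (x s)) ⟪gradient f (x t), deriv x t⟫ t := by
      have hFd : HasFDerivAt f ((InnerProductSpace.toDual ℝ _) (gradient f (x t))) (x t) :=
        (hf (x t)).hasGradientAt.hasFDerivAt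
      exact hFd.comp_hasDerivAt t hx1
    have hgy : HasDerivAt (fun s => g (y s)) ⟪gradient g (y t), deriv y t⟫ t := by
      have hFd : HasFDerivAt g ((InnerProductSpace.toDual ℝ _) (gradient g (y t))) (y t) :=
        (hg (y t)).hasGradientAt.hasFDerivAt
      exact hFd.comp_hasDerivAt t hy1
    have hKx : HasDerivAt (fun s => K (x s)) (K (deriv x t)) t :=
      K.hasFDerivAt.comp_hasDerivAt t hx1
    have hVxd : HasDerivAt Vx (⟪gradient f (x t), deriv x t⟫ + ⟪K (deriv x t), ys⟫) t := by
      rw [hVx]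
      have h2 : HasDerivAt (fun s => ⟪K (x s) - K xs, ys⟫) ⟪K (deriv x t), ys⟫ t := by
        have := (hKx.sub_const (K xs)).inner ℝ (hasDerivAt_const t ys)
        simpa using this
      exact (hfx.sub_const (f xs)).add h2
    have hVyd : HasDerivAt Vy (⟪gradient g (y t), deriv y t⟫ - ⟪K xs, deriv y t⟫) t := by
      rw [hVy]
      have h3 : HasDerivAt (fun s => ⟪K xs, y s - ys⟫) ⟪K xs, deriv y t⟫ t := by
        have := (hasDerivAt_const t (K xs)).inner ℝ (hy1.sub_const ys)
        simpa using this
      exact (hgy.sub_const (g ys)).sub h3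
    have h4 : HasDerivAt (fun s => ε s/2 * Nf s)
        (deriv ε t/2 * Nf t + ε t * (⟪x t, deriv x t⟫ + ⟪y t, deriv y t⟫)) t := by
      have hN : HasDerivAt Nf (⟪x t, deriv x t⟫ + ⟪deriv x t, x t⟫
          + (⟪y t, deriv y t⟫ + ⟪deriv y t, y t⟫)) t := by
        rw [hNf]; exact (hx1.inner ℝ hx1).add (hy1.inner ℝ hy1)
      have := (hεd.div_const 2).mul hN
      refine this.congr_deriv ?_
      rw [real_inner_comm (deriv x t) (x t), real_inner_comm (deriv y t) (y t)]; ring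
    have hQd : HasDerivAt Q (⟪gradient f (x t), deriv x t⟫ + ⟪K (deriv x t), ys⟫
        + (⟪gradient g (y t), deriv y t⟫ - ⟪K xs, deriv y t⟫)
        + (deriv ε t/2 * Nf t + ε t * (⟪x t, deriv x t⟫ + ⟪y t, deriv y t⟫))) t := by
      rw [hQ]; exact (hVxd.add hVyd).add h4
    have hP : HasDerivAt (fun s => θ^2*s^2*β s) (θ^2*(2*t*β t + t^2*deriv β t)) t := by
      have h1 : HasDerivAt (fun s : ℝ => θ^2*s^2) (θ^2*(2*t)) t := by
        have := (hasDerivAt_pow 2 t).const_mul (θ^2)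
        refine this.congr_deriv ?_
        norm_num
      have := h1.mul hβd
      refine this.congr_deriv ?_; ring
    have hu : HasDerivAt (fun s => x s - xs + (θ*s) • deriv x s)
        (deriv x t + (θ • deriv x t + (θ*t) • deriv (deriv x) t)) t := by
      have hcθ : HasDerivAt (fun s : ℝ => θ*s) θ t := by
        simpa using (hasDerivAt_id t).const_mul θ
      have hsm := hcθ.smul hx1'
      have hsm' : HasDerivAt (fun s => (θ*s) • deriv x s)
          (θ • deriv x t + (θ*t) • deriv (deriv x) t) t := by
        refine hsm.congr_deriv ?_
        rw [add_comm]
      exact (hx1.sub_const xs).add hsm'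
    have hw : HasDerivAt (fun s => y s - ys + (θ*s) • deriv y s)
        (deriv y t + (θ • deriv y t + (θ*t) • deriv (deriv y) t)) t := by
      have hcθ : HasDerivAt (fun s : ℝ => θ*s) θ t := by
        simpa using (hasDerivAt_id t).const_mul θ
      have hsm := hcθ.smul hy1'
      have hsm' : HasDerivAt (fun s => (θ*s) • deriv y s)
          (θ • deriv y t + (θ*t) • deriv (deriv y) t) t := by
        refine hsm.congr_deriv ?_
        rw [add_comm]
      exact (hy1.sub_const ys).add hsm'
    have hT2x : HasDerivAt
        (fun s => 1/2 * ⟪x s - xs + (θ*s) • deriv x s, x s - xs + (θ*s) • deriv x s⟫)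
        ⟪x t - xs + (θ*t) • deriv x t,
          deriv x t + (θ • deriv x t + (θ*t) • deriv (deriv x) t)⟫ t := by
      have := (hu.inner ℝ hu).const_mul (1/2 : ℝ)
      refine this.congr_deriv ?_
      rw [real_inner_comm (deriv x t + (θ • deriv x t + (θ*t) • deriv (deriv x) t))
        (x t - xs + (θ*t) • deriv x t)]
      ring
    have hT2y : HasDerivAt
        (fun s => 1/2 * ⟪y s - ys + (θ*s) • deriv y s, y s - ys + (θ*s) • deriv y s⟫)
        ⟪y t - ys + (θ*t) • deriv y t,
          deriv y t + (θ • deriv y t + (θ*t) • deriv (deriv y) t)⟫ t := by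
      have := (hw.inner ℝ hw).const_mul (1/2 : ℝ)
      refine this.congr_deriv ?_
      rw [real_inner_comm (deriv y t + (θ • deriv y t + (θ*t) • deriv (deriv y) t))
        (y t - ys + (θ*t) • deriv y t)]
      ring
    have hc2 : HasDerivAt (fun s => (θ*s*α s - θ - 1)/2) ((θ*α t + θ*t*deriv α t)/2) t := by
      have hbase : HasDerivAt (fun s => θ*s*α s) (θ*α t + θ*t*deriv α t) t := by
        have hcθ : HasDerivAt (fun s : ℝ => θ*s) θ t := by
          simpa using (hasDerivAt_id t).const_mul θ
        have := hcθ.mul hαd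
        refine this.congr_deriv ?_; ring
      exact ((hbase.sub_const θ).sub_const 1).div_const 2
    have hNad : HasDerivAt Na (⟪x t - xs, deriv x t⟫ + ⟪deriv x t, x t - xs⟫
        + (⟪y t - ys, deriv y t⟫ + ⟪deriv y t, y t - ys⟫)) t := by
      rw [hNa]
      exact ((hx1.sub_const xs).inner ℝ (hx1.sub_const xs)).add
        ((hy1.sub_const ys).inner ℝ (hy1.sub_const ys))
    have hT3 : HasDerivAt (fun s => (θ*s*α s - θ - 1)/2 * Na s)
        ((θ*α t + θ*t*deriv α t)/2 * Na t
          + (θ*t*α t - θ - 1) * (⟪x t - xs, deriv x t⟫ + ⟪y t - ys, deriv y t⟫)) t := by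
      have := hc2.mul hNad
      refine this.congr_deriv ?_
      rw [real_inner_comm (deriv x t) (x t - xs), real_inner_comm (deriv y t) (y t - ys)]
      ring
    rw [hE, hEd]
    exact (((hP.mul hQd).add hT2x).add hT2y).add hT3
  -- the differential inequality
  have hEdle : ∀ t ∈ Set.Ioi t₀, Ed t ≤ -(θ*t*(θ*t*α t - θ - 1))
      * (⟪deriv x t, deriv x t⟫ + ⟪deriv y t, deriv y t⟫) + C0*(t*β t*ε t) := by
    intro t hti
    have htt₀ : t₀ < t := hti
    have ht0 : (0:ℝ) < t := lt_trans ht₀ htt₀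
    have hθt : 0 < θ*t := mul_pos hθ ht0
    have hβt := hβpos t htt₀.le
    have hεt := hεpos t htt₀.le
    have hθtβ : 0 ≤ θ*t*β t := le_of_lt (mul_pos hθt hβt)
    -- rearrange the ODE
    have hode := heqn t htt₀.le
    have hXeq : deriv (deriv x) t = -(α t • deriv x t) - β t • (gradient f (x t)
        + ε t • x t + (ContinuousLinearMap.adjoint K) (y t + (θ * t) • deriv y t)) := by
      have h := hode.1
      rw [add_assoc, add_eq_zero_iff_eq_neg] at h
      rw [h, neg_add, ← sub_eq_add_neg]
    have hYeq : deriv (deriv y) t = -(α t • deriv y t)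
        + β t • (K (x t + (θ * t) • deriv x t) - gradient g (y t) - ε t • y t) := by
      have h := hode.2
      rw [sub_eq_zero] at h
      have h2 := eq_sub_of_add_eq h
      rw [h2, sub_eq_add_neg, add_comm]
    have hkey := key_identity' K (deriv x t) (gradient f (x t)) xs (x t)
        (deriv y t) (gradient g (y t)) ys (y t) θ t (α t) (β t) (ε t)
    have hEdeq : Ed t = θ^2*(2*t*β t + t^2*deriv β t) * Q t
        + θ^2*t^2*β t * (deriv ε t/2) * Nf t
        - θ*t*(θ*t*α t - θ - 1) * (⟪deriv x t, deriv x t⟫ + ⟪deriv y t, deriv y t⟫)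
        - θ*t*β t * (⟪x t - xs, gradient f (x t)⟫ + ⟪K (x t) - K xs, ys⟫
            + (⟪y t - ys, gradient g (y t)⟫ - ⟪K xs, y t - ys⟫))
        - θ*t*β t * ε t * (⟪x t - xs, x t⟫ + ⟪y t - ys, y t⟫)
        + (θ*α t + θ*t*deriv α t)/2 * Na t := by
      rw [hEd]; beta_reduce
      rw [hXeq, hYeq, hQ, hNf]; beta_reduce
      linear_combination hkey
    -- coefficient estimates
    have hcoef : θ^2*(2*t*β t + t^2*deriv β t) ≤ θ*t*β t := by
      have h := hβ' t htt₀.le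
      rw [div_le_div_iff₀ hβt hθt] at h
      linarith [mul_le_mul_of_nonneg_left h hθt.le]
    have hε'0 : deriv ε t ≤ 0 := anti_deriv_nonpos' hεanti htt₀ (c1_hasDerivAt hεC1 htt₀)
    have hgradf : f (x t) - f xs ≤ ⟪x t - xs, gradient f (x t)⟫ := by
      have h := grad_ineq' hf hfconv (x t) xs
      rw [show xs - x t = -(x t - xs) from (neg_sub _ _).symm, inner_neg_right] at h
      rw [real_inner_comm]
      linarith
    have hgradg : g (y t) - g ys ≤ ⟪y t - ys, gradient g (y t)⟫ := by
      have h := grad_ineq' hg hgconv (y t) ys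
      rw [show ys - y t = -(y t - ys) from (neg_sub _ _).symm, inner_neg_right] at h
      rw [real_inner_comm]
      linarith
    have hip : ⟪x t - xs, x t⟫ + ⟪y t - ys, y t⟫ = (Nf t + Na t - S)/2 := by
      rw [inner_half_identity (x t) xs, inner_half_identity (y t) ys, hNf, hNa, hS]
      beta_reduce; ring
    rw [hEdeq]
    have p1 : θ^2*(2*t*β t + t^2*deriv β t) * Q t ≤ θ*t*β t * Q t :=
      mul_le_mul_of_nonneg_right hcoef (hQ0 t htt₀.le)
    have p2 : θ^2*t^2*β t * (deriv ε t/2) * Nf t ≤ 0 :=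
      mul_nonpos_of_nonpos_of_nonneg
        (mul_nonpos_of_nonneg_of_nonpos (by positivity) (by linarith)) (hNf0 t)
    have p3 : θ*t*β t*(Vx t + Vy t) ≤ θ*t*β t*(⟪x t - xs, gradient f (x t)⟫
        + ⟪K (x t) - K xs, ys⟫ + (⟪y t - ys, gradient g (y t)⟫ - ⟪K xs, y t - ys⟫)) := by
      apply mul_le_mul_of_nonneg_left _ hθtβ
      rw [hVx, hVy]; beta_reduce
      linarith [hgradf, hgradg]
    have p4 : θ*t*β t * ε t * (⟪x t - xs, x t⟫ + ⟪y t - ys, y t⟫)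
        = θ*t*β t*ε t*(Nf t/2) + θ*(t*β t*ε t)/2*Na t - C0*(t*β t*ε t) := by
      rw [hip, hC0]; ring
    have p5 : (θ*α t + θ*t*deriv α t)/2 * Na t ≤ θ*(t*β t*ε t)/2 * Na t := by
      apply mul_le_mul_of_nonneg_right _ (hNa0 t)
      have h := hαε t htt₀.le
      nlinarith [h, hθ.le]
    have p6 : θ*t*β t*Q t = θ*t*β t*(Vx t + Vy t) + θ*t*β t*ε t*(Nf t/2) := by
      rw [hQ]; beta_reduce; ring
    linarith [p1, p2, p3, p4, p5, p6]
  -- continuity facts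
  set G : ℝ → ℝ := fun t => θ*t*(θ*t*α t - θ - 1)
      * (⟪deriv x t, deriv x t⟫ + ⟪deriv y t, deriv y t⟫) with hG
  set ψ : ℝ → ℝ := fun t => C0*(t*β t*ε t) with hψ
  set a₀ : ℝ := t₀ + 1 with ha₀
  have ha₀t : t₀ < a₀ := by rw [ha₀]; linarith
  have hXc : ContinuousOn (deriv x) (Set.Ioi t₀) := by
    apply ((c2_deriv_continuousOn hx2).mono Set.Ioi_subset_Ici_self).congr
    intro s hs; exact deriv_eq_derivWithin hs
  have hYc : ContinuousOn (deriv y) (Set.Ioi t₀) := by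
    apply ((c2_deriv_continuousOn hy2).mono Set.Ioi_subset_Ici_self).congr
    intro s hs; exact deriv_eq_derivWithin hs
  have hαc : ContinuousOn α (Set.Ioi t₀) := hαC1.continuousOn.mono Set.Ioi_subset_Ici_self
  have hβc : ContinuousOn β (Set.Ioi t₀) := hβC1.continuousOn.mono Set.Ioi_subset_Ici_self
  have hεc : ContinuousOn ε (Set.Ioi t₀) := hεC1.continuousOn.mono Set.Ioi_subset_Ici_self
  have hGc : ContinuousOn G (Set.Ioi t₀) := by
    rw [hG]
    exact ((continuousOn_const.mul continuousOn_id).mul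
        (((continuousOn_const.mul continuousOn_id).mul hαc).sub continuousOn_const
          |>.sub continuousOn_const)).mul
      ((hXc.inner hXc).add (hYc.inner hYc))
  have hψc : ContinuousOn ψ (Set.Ioi t₀) := by
    rw [hψ]
    exact continuousOn_const.mul ((continuousOn_id.mul hβc).mul hεc)
  have hGψc : ContinuousOn (fun s => G s - ψ s) (Set.Ioi t₀) := hGc.sub hψc
  have hS0 : 0 ≤ S := by
    rw [hS]; exact add_nonneg real_inner_self_nonneg real_inner_self_nonneg
  have hC00 : 0 ≤ C0 := by rw [hC0]; positivity
  have hψnn : ∀ s ∈ Set.Ioi t₀, 0 ≤ ψ s := by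
    intro s hs
    have h1 := hβpos s hs.le
    have h2 := hεpos s hs.le
    have h3 : (0:ℝ) < s := lt_trans ht₀ hs
    rw [hψ]; beta_reduce
    exact mul_nonneg hC00 (by positivity)
  have hψint : IntegrableOn ψ (Set.Ioi t₀) := by rw [hψ]; exact hεint.const_mul C0
  set Cψ : ℝ := ∫ s in Set.Ioi t₀, ψ s with hCψ
  have hψT : ∀ T, ∫ s in Set.Ioc a₀ T, ψ s ≤ Cψ := by
    intro T
    rw [hCψ]
    refine setIntegral_mono_set hψint ?_ ?_
    · exact (ae_restrict_iff' measurableSet_Ioi).2 (Eventually.of_forall hψnn)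
    · exact ((Set.Ioc_subset_Ioi_self).trans (Set.Ioi_subset_Ioi ha₀t.le)).eventuallyLE
  -- the main integral bound via the energy
  have hbound : ∀ T, a₀ ≤ T → ∫ s in a₀..T, G s ≤ E a₀ + Cψ := by
    intro T hT
    have hsub : Set.Icc a₀ T ⊆ Set.Ioi t₀ := fun s hs => lt_of_lt_of_le ha₀t hs.1
    have huIcc : Set.uIcc a₀ T ⊆ Set.Ioi t₀ := by
      rw [Set.uIcc_of_le hT]; exact hsub
    have hGint : IntervalIntegrable G volume a₀ T :=
      (hGc.mono huIcc).intervalIntegrable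
    have hψint' : IntervalIntegrable ψ volume a₀ T :=
      (hψc.mono huIcc).intervalIntegrable
    have hGψint : IntervalIntegrable (fun s => G s - ψ s) volume a₀ T := hGint.sub hψint'
    have hW : ∀ r ∈ Set.Icc a₀ T, HasDerivAt (fun r => E r + ∫ s in a₀..r, (G s - ψ s))
        (Ed r + (G r - ψ r)) r := by
      intro r hr
      have hrI : r ∈ Set.Ioi t₀ := hsub hr
      have h2 : HasDerivAt (fun r => ∫ s in a₀..r, (G s - ψ s)) (G r - ψ r) r := by
        apply intervalIntegral.integral_hasDerivAt_right
        · apply (hGψc.mono _).intervalIntegrable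
          rw [Set.uIcc_of_le hr.1]
          exact fun s hs => lt_of_lt_of_le ha₀t hs.1
        · exact hGψc.stronglyMeasurableAtFilter isOpen_Ioi r hrI
        · exact hGψc.continuousAt (isOpen_Ioi.mem_nhds hrI)
      exact (hder r hrI).add h2
    have hanti : AntitoneOn (fun r => E r + ∫ s in a₀..r, (G s - ψ s)) (Set.Icc a₀ T) := by
      apply antitoneOn_of_deriv_nonpos (convex_Icc a₀ T)
      · exact fun r hr => ((hW r hr).continuousAt).continuousWithinAt
      · intro r hr
        rw [interior_Icc] at hr
        exact ((hW r (Set.Ioo_subset_Icc_self hr)).differentiableAt).differentiableWithinAt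
      · intro r hr
        rw [interior_Icc] at hr
        rw [(hW r (Set.Ioo_subset_Icc_self hr)).deriv]
        have hrI : r ∈ Set.Ioi t₀ := hsub (Set.Ioo_subset_Icc_self hr)
        have h1 := hEdle r hrI
        have hGr : G r = θ*r*(θ*r*α r - θ - 1)
            * (⟪deriv x r, deriv x r⟫ + ⟪deriv y r, deriv y r⟫) := by rw [hG]
        have hψr : ψ r = C0*(r*β r*ε r) := by rw [hψ]
        rw [hGr, hψr]
        linarith [h1]
    have hmono := hanti (Set.left_mem_Icc.2 hT) (Set.right_mem_Icc.2 hT) hT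
    simp only [intervalIntegral.integral_same] at hmono
    have hET : 0 ≤ E T := hEnn T (lt_of_lt_of_le ha₀t hT)
    have hsplit : ∫ s in a₀..T, (G s - ψ s) = (∫ s in a₀..T, G s) - ∫ s in a₀..T, ψ s :=
      intervalIntegral.integral_sub hGint hψint'
    have hψle : ∫ s in a₀..T, ψ s ≤ Cψ := by
      rw [intervalIntegral.integral_of_le hT]; exact hψT T
    rw [hsplit] at hmono
    linarith
  -- relate the target integrand to G
  set φf : ℝ → ℝ :=
      fun t => t * (t * α t - 1 / θ - 1) * (‖deriv x t‖ ^ 2 + ‖deriv y t‖ ^ 2) with hφf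
  have hφG : ∀ s ∈ Set.Ioi t₀, φf s = (θ^2)⁻¹ * G s := by
    intro s hs
    rw [hφf, hG]; beta_reduce
    rw [real_inner_self_eq_norm_sq, real_inner_self_eq_norm_sq]
    field_simp
    ring
  have hφnn : ∀ s ∈ Set.Ioi t₀, 0 ≤ φf s := by
    intro s hs
    have h1 := hθα s hs.le
    have hs0 : (0:ℝ) < s := lt_trans ht₀ hs
    have h2 : 0 < θ⁻¹ * (θ*s*α s - θ - 1) := mul_pos (inv_pos.2 hθ) h1
    have h3 : θ⁻¹ * (θ*s*α s - θ - 1) = s*α s - 1/θ - 1 := by field_simp; ring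
    rw [hφf]; beta_reduce
    have h4 : 0 ≤ s * (s*α s - 1/θ - 1) := by nlinarith
    positivity
  have hphiIoc : ∀ T : ℝ, IntegrableOn φf (Set.Ioc t₀ T) := by
    intro T
    have hcont : ContinuousOn (fun t => t * (t * α t - 1 / θ - 1)
        * (‖derivWithin x (Set.Ici t₀) t‖ ^ 2 + ‖derivWithin y (Set.Ici t₀) t‖ ^ 2))
        (Set.Icc t₀ T) := by
      apply ContinuousOn.mono _ (Set.Icc_subset_Ici_self : Set.Icc t₀ T ⊆ Set.Ici t₀)
      exact (continuousOn_id.mul (((continuousOn_id.mul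
          (hαC1.continuousOn)).sub continuousOn_const).sub continuousOn_const)).mul
        ((((c2_deriv_continuousOn hx2).norm).pow 2).add
          (((c2_deriv_continuousOn hy2).norm).pow 2))
    have hint : IntegrableOn (fun t => t * (t * α t - 1 / θ - 1)
        * (‖derivWithin x (Set.Ici t₀) t‖ ^ 2 + ‖derivWithin y (Set.Ici t₀) t‖ ^ 2))
        (Set.Ioc t₀ T) := (hcont.integrableOn_Icc).mono_set Set.Ioc_subset_Icc_self
    apply hint.congr_fun _ measurableSet_Ioc
    intro s hs
    rw [hφf]; beta_reduce
    rw [deriv_eq_derivWithin (hs.1 : t₀ < s), deriv_eq_derivWithin (hs.1 : t₀ < s)]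
  -- final: apply the improper-integral criterion
  refine integrableOn_Ioi_of_intervalIntegral_norm_bounded
    ((∫ s in Set.Ioc t₀ a₀, ‖φf s‖) + (θ^2)⁻¹*(E a₀ + Cψ)) t₀
    (b := fun i : ℝ => max i a₀) (l := atTop)
    (fun i => hphiIoc _) (tendsto_atTop_mono (fun i => le_max_left i a₀) tendsto_id) ?_
  refine Eventually.of_forall (fun i => ?_)
  have hTa : a₀ ≤ max i a₀ := le_max_right _ _
  set T := max i a₀ with hT
  have ht₀T : t₀ ≤ T := le_trans ha₀t.le hTa
  rw [intervalIntegral.integral_of_le ht₀T]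
  have hunion : Set.Ioc t₀ a₀ ∪ Set.Ioc a₀ T = Set.Ioc t₀ T :=
    Set.Ioc_union_Ioc_eq_Ioc ha₀t.le hTa
  rw [← hunion, setIntegral_union (Set.Ioc_disjoint_Ioc_of_le le_rfl) measurableSet_Ioc
    ((hphiIoc a₀).norm) (((hphiIoc T).mono_set
      (Set.Ioc_subset_Ioc_left ha₀t.le)).norm)]
  have h2 : ∫ s in Set.Ioc a₀ T, ‖φf s‖ ≤ (θ^2)⁻¹*(E a₀ + Cψ) := by
    have heq1 : ∫ s in Set.Ioc a₀ T, ‖φf s‖ = ∫ s in a₀..T, ‖φf s‖ :=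
      (intervalIntegral.integral_of_le hTa).symm
    have heq2 : ∫ s in a₀..T, ‖φf s‖ = ∫ s in a₀..T, (θ^2)⁻¹ * G s := by
      apply intervalIntegral.integral_congr
      intro s hs
      rw [Set.uIcc_of_le hTa] at hs
      have hsI : s ∈ Set.Ioi t₀ := lt_of_lt_of_le ha₀t hs.1
      show ‖φf s‖ = (θ^2)⁻¹ * G s
      rw [Real.norm_of_nonneg (hφnn s hsI), hφG s hsI]
    have heq3 : ∫ s in a₀..T, (θ^2)⁻¹ * G s = (θ^2)⁻¹ * ∫ s in a₀..T, G s :=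
      intervalIntegral.integral_const_mul _ _
    rw [heq1, heq2, heq3]
    have hb := hbound T hTa
    have hθ2 : (0:ℝ) ≤ (θ^2)⁻¹ := by positivity
    exact mul_le_mul_of_nonneg_left hb hθ2
  linarith
end
end
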